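/- arXiv:1412.8358 — 8 statements merged into one kernel-verified Lean document; each statement's English description precedes it below -/
import Mathlib

section
/- Let n ≥ 2 and let u, v be vertices of the odd graph O_n such that [u] and [v] differ in exactly k elements, i.e., |[u] \ [v]| = k. Then there exists a path of length 2k from u to v in O_n, and every walk of even length from u to v in O_n has length at least 2k; in other words, the shortest even-length path from u to v has length exactly 2k. -/
/-- The odd graph `O_n`: vertices are the `(n-1)`-element subsets of
`{1, 2, …, 2n-1}` (modelled as `Fin (2*n-1)`), two vertices being adjacent
iff the corresponding subsets are disjoint. -/
def OddGraph (n : ℕ) : SimpleGraph {s : Finset (Fin (2 * n - 1)) // s.card = n - 1} where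
  Adj u v := Disjoint u.1 v.1 ∧ u ≠ v
  symm := ⟨fun u v h => ⟨h.1.symm, h.2.symm⟩⟩
  loopless := ⟨fun u h => h.2 rfl⟩

namespace OddGraphAux

/-- Lower bound on walk lengths: along an even-length walk the start/end sets
differ in at most half the length many elements; along an odd-length walk they
intersect in less than half the length many elements. -/
lemma lower_bound {n : ℕ} (hn : 2 ≤ n) :
    ∀ (a v : {s : Finset (Fin (2 * n - 1)) // s.card = n - 1})
      (q : (OddGraph n).Walk a v),
      (Even q.length → 2 * (a.1 \ v.1).card ≤ q.length) ∧
      (¬ Even q.length → 2 * (a.1 ∩ v.1).card < q.length) := by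
  have hcard : ∀ s : Finset (Fin (2 * n - 1)), sᶜ.card = 2 * n - 1 - s.card := fun s => by
    rw [Finset.card_compl, Fintype.card_fin]
  intro a v q
  induction q with
  | nil =>
    constructor
    · intro _; simp
    · intro h; simp at h
  | @cons a b c hab q ih =>
    have hd : Disjoint a.1 b.1 := hab.1
    constructor
    · intro he
      simp only [SimpleGraph.Walk.length_cons] at he ⊢
      have hq : ¬ Even q.length := by
        rw [Nat.even_add_one] at he; exact fun h => he h
      have h2 := ih.2 hq
      have f1 : (a.1 \ (c.1 \ b.1)).card + (c.1 \ b.1).card = (a.1 ∪ (c.1 \ b.1)).card :=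
        Finset.card_sdiff_add_card _ _
      have f2 : a.1 ∪ (c.1 \ b.1) ⊆ b.1ᶜ := by
        intro x hx
        rw [Finset.mem_compl]
        rcases Finset.mem_union.mp hx with h | h
        · exact Finset.disjoint_left.mp hd h
        · exact (Finset.mem_sdiff.mp h).2
      have f2' : (a.1 ∪ (c.1 \ b.1)).card ≤ 2 * n - 1 - (n - 1) := by
        have := Finset.card_le_card f2
        rwa [hcard, b.2] at this
      have f3 : (c.1 \ b.1).card + (c.1 ∩ b.1).card = c.1.card :=
        Finset.card_sdiff_add_card_inter _ _
      have f4 : (a.1 \ c.1).card ≤ (a.1 \ (c.1 \ b.1)).card :=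
        Finset.card_le_card (Finset.sdiff_subset_sdiff Finset.Subset.rfl Finset.sdiff_subset)
      have f5 : (b.1 ∩ c.1).card = (c.1 ∩ b.1).card := by rw [Finset.inter_comm]
      have hc := c.2
      omega
    · intro he
      simp only [SimpleGraph.Walk.length_cons] at he ⊢
      have hq : Even q.length := by
        rw [Nat.even_add_one, not_not] at he; exact he
      have h1 := ih.1 hq
      have g1 : (a.1 ∩ c.1).card ≤ (c.1 \ b.1).card := by
        apply Finset.card_le_card
        intro x hx
        rw [Finset.mem_sdiff]
        exact ⟨(Finset.mem_inter.mp hx).2,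
          fun hxb => (Finset.disjoint_left.mp hd (Finset.mem_inter.mp hx).1) hxb⟩
      have g2 : (c.1 \ b.1).card = (b.1 \ c.1).card :=
        Finset.card_sdiff_comm (by rw [c.2, b.2])
      omega

/-- Construction of a path of length `2k` with a structural invariant on its
support used to prove distinctness of vertices. -/
lemma exists_path {n : ℕ} (hn : 2 ≤ n) :
    ∀ (k : ℕ) (u v : {s : Finset (Fin (2 * n - 1)) // s.card = n - 1}),
      (u.1 \ v.1).card = k →
      ∃ p : (OddGraph n).Walk u v, p.IsPath ∧ p.length = 2 * k ∧
        ∀ w ∈ p.support,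
          (w.1 ⊆ u.1 ∪ v.1 ∧ (w.1 \ v.1).card ≤ k) ∨ (u.1 ∪ v.1)ᶜ ⊆ w.1 := by
  have hcard : ∀ s : Finset (Fin (2 * n - 1)), sᶜ.card = 2 * n - 1 - s.card := fun s => by
    rw [Finset.card_compl, Fintype.card_fin]
  intro k
  induction k with
  | zero =>
    intro u v hk
    have huv : u = v := by
      apply Subtype.ext
      apply Finset.eq_of_subset_of_card_le
      · exact Finset.sdiff_eq_empty_iff_subset.mp (Finset.card_eq_zero.mp hk)
      · rw [u.2, v.2]
    subst huv
    refine ⟨.nil, .nil, rfl, ?_⟩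
    intro w hw
    simp only [SimpleGraph.Walk.support_nil, List.mem_singleton] at hw
    subst hw
    left
    exact ⟨Finset.subset_union_left, by simp⟩
  | succ k ih =>
    intro u v hk
    have hkn : k + 1 ≤ n - 1 := by
      have h := Finset.card_le_card (Finset.sdiff_subset (s := u.1) (t := v.1))
      rw [hk, u.2] at h
      exact h
    obtain ⟨a, ha⟩ : (u.1 \ v.1).Nonempty := Finset.card_pos.mp (by omega)
    have hvu : (v.1 \ u.1).card = k + 1 :=
      (Finset.card_sdiff_comm (by rw [u.2, v.2])).symm.trans hk
    obtain ⟨b, hb⟩ : (v.1 \ u.1).Nonempty := Finset.card_pos.mp (by omega)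
    obtain ⟨hau, hav⟩ := Finset.mem_sdiff.mp ha
    obtain ⟨hbv, hbu⟩ := Finset.mem_sdiff.mp hb
    set M : Finset (Fin (2 * n - 1)) := (insert b u.1)ᶜ with hM
    have hMcard : M.card = n - 1 := by
      rw [hM, hcard, Finset.card_insert_of_notMem hbu, u.2]; omega
    set u' : Finset (Fin (2 * n - 1)) := insert b (u.1.erase a) with hu'
    have hu'card : u'.card = n - 1 := by
      rw [hu', Finset.card_insert_of_notMem (fun h => hbu (Finset.mem_of_mem_erase h)),
        Finset.card_erase_of_mem hau, u.2]
      omega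
    have hu'sub : u' ⊆ u.1 ∪ v.1 := by
      intro x hx
      rcases Finset.mem_insert.mp hx with h | h
      · exact Finset.mem_union_right _ (h ▸ hbv)
      · exact Finset.mem_union_left _ (Finset.mem_of_mem_erase h)
    have hu'v : (u' \ v.1).card = k := by
      have heq : u' \ v.1 = (u.1 \ v.1).erase a := by
        ext x
        simp only [hu', Finset.mem_sdiff, Finset.mem_insert, Finset.mem_erase]
        constructor
        · rintro ⟨h1 | ⟨hxa, hxu⟩, h2⟩
          · exact absurd (h1 ▸ hbv) h2
          · exact ⟨hxa, hxu, h2⟩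
        · rintro ⟨hxa, hxu, hxv⟩
          exact ⟨Or.inr ⟨hxa, hxu⟩, hxv⟩
      rw [heq, Finset.card_erase_of_mem ha, hk]
      omega
    obtain ⟨p', hp'path, hp'len, hp'supp⟩ := ih ⟨u', hu'card⟩ v hu'v
    -- the complement of u ∪ v is nonempty
    have hUVcard : (u.1 ∪ v.1).card = n + k := by
      have h := Finset.card_sdiff_add_card v.1 u.1
      rw [hvu, u.2, Finset.union_comm] at h
      omega
    obtain ⟨r, hr⟩ : ((u.1 ∪ v.1)ᶜ).Nonempty := by
      apply Finset.card_pos.mp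
      rw [hcard, hUVcard]
      omega
    have hrm : r ∉ u.1 ∪ v.1 := Finset.mem_compl.mp hr
    have hru : r ∉ u.1 := fun h => hrm (Finset.mem_union_left _ h)
    have hrv : r ∉ v.1 := fun h => hrm (Finset.mem_union_right _ h)
    have hrb : r ≠ b := fun h => hrv (h ▸ hbv)
    have hrM : r ∈ M := by
      rw [hM, Finset.mem_compl, Finset.mem_insert]
      push_neg
      exact ⟨hrb, hru⟩
    -- adjacency
    have hdisj1 : Disjoint u.1 M :=
      disjoint_compl_right.mono_left (Finset.subset_insert b u.1)
    have hdisj2 : Disjoint M u' :=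
      disjoint_compl_left.mono_right (Finset.insert_subset_insert b (Finset.erase_subset a u.1))
    have hne : ∀ x y : {s : Finset (Fin (2 * n - 1)) // s.card = n - 1},
        Disjoint x.1 y.1 → x ≠ y := by
      intro x y hd heq
      subst heq
      have := disjoint_self.mp hd
      have hx := x.2
      rw [this] at hx
      simp only [Finset.bot_eq_empty, Finset.card_empty] at hx
      omega
    have hadj1 : (OddGraph n).Adj u ⟨M, hMcard⟩ := ⟨hdisj1, hne _ _ hdisj1⟩
    have hadj2 : (OddGraph n).Adj ⟨M, hMcard⟩ ⟨u', hu'card⟩ := ⟨hdisj2, hne _ _ hdisj2⟩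
    -- auxiliary subset facts
    have hsubUV : u' ∪ v.1 ⊆ u.1 ∪ v.1 :=
      Finset.union_subset hu'sub Finset.subset_union_right
    have hcompl : (u.1 ∪ v.1)ᶜ ⊆ (u' ∪ v.1)ᶜ := by
      intro x hx
      rw [Finset.mem_compl] at hx ⊢
      exact fun h => hx (hsubUV h)
    have haU' : a ∉ u' := by
      rw [hu', Finset.mem_insert]
      push_neg
      exact ⟨fun h => hav (h ▸ hbv), Finset.notMem_erase a u.1⟩
    have haC : a ∈ (u' ∪ v.1)ᶜ := by
      rw [Finset.mem_compl, Finset.mem_union]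
      push_neg
      exact ⟨haU', hav⟩
    have hrC : r ∈ (u' ∪ v.1)ᶜ := hcompl hr
    -- u is not on p'
    have hunot : u ∉ p'.support := by
      intro hmem
      rcases hp'supp u hmem with ⟨_, hle⟩ | hge
      · omega
      · exact hru (hge hrC)
    -- M is not on p'
    have hMnot : (⟨M, hMcard⟩ : {s : Finset (Fin (2 * n - 1)) // s.card = n - 1})
        ∉ p'.support := by
      intro hmem
      rcases hp'supp _ hmem with ⟨hsub1, _⟩ | hge
      · exact hrm (hsubUV (hsub1 hrM))
      · have : a ∈ M := hge haC
        rw [hM, Finset.mem_compl, Finset.mem_insert] at this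
        push_neg at this
        exact this.2 hau
    refine ⟨.cons hadj1 (.cons hadj2 p'), ?_, ?_, ?_⟩
    · rw [SimpleGraph.Walk.cons_isPath_iff, SimpleGraph.Walk.cons_isPath_iff]
      refine ⟨⟨hp'path, hMnot⟩, ?_⟩
      rw [SimpleGraph.Walk.support_cons, List.mem_cons]
      push_neg
      exact ⟨hadj1.2, hunot⟩
    · simp only [SimpleGraph.Walk.length_cons, hp'len]
      omega
    · intro w hw
      rw [SimpleGraph.Walk.support_cons, SimpleGraph.Walk.support_cons,
        List.mem_cons, List.mem_cons] at hw
      rcases hw with hw | hw | hw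
      · subst hw
        exact Or.inl ⟨Finset.subset_union_left, by omega⟩
      · subst hw
        right
        intro x hx
        rw [Finset.mem_compl] at hx
        show x ∈ M
        rw [hM, Finset.mem_compl, Finset.mem_insert]
        push_neg
        exact ⟨fun h => hx (Finset.mem_union_right _ (h ▸ hbv)),
          fun h => hx (Finset.mem_union_left _ h)⟩
      · rcases hp'supp w hw with ⟨h1, h2⟩ | hge
        · exact Or.inl ⟨h1.trans hsubUV, by omega⟩
        · exact Or.inr (fun x hx => hge (hcompl hx))

end OddGraphAux

/-- If `[u]` and `[v]` differ in exactly `k` elements, then there is a path of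
length `2k` from `u` to `v`, and every even-length walk from `u` to `v` has
length at least `2k`. -/
theorem shortest_even_path (n : ℕ) (hn : 2 ≤ n)
    (u v : {s : Finset (Fin (2 * n - 1)) // s.card = n - 1}) (k : ℕ)
    (hk : (u.1 \ v.1).card = k) :
    (∃ p : (OddGraph n).Walk u v, p.IsPath ∧ p.length = 2 * k) ∧
    ∀ q : (OddGraph n).Walk u v, Even q.length → 2 * k ≤ q.length := by
  constructor
  · obtain ⟨p, hpath, hlen, -⟩ := OddGraphAux.exists_path hn k u v hk
    exact ⟨p, hpath, hlen⟩
  · intro q hq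
    have h := (OddGraphAux.lower_bound hn u v q).1 hq
    omega
end

section
/- Let n ≥ 3. Every path v_1 v_2 v_3 v_4 of length 3 in the odd graph O_n is contained in a cycle of length 6; that is, there exist vertices v_5 and v_6 such that v_1 v_2 v_3 v_4 v_5 v_6 is a 6-cycle in O_n. -/
/-- If `s, t` are disjoint `(n-1)`-subsets of `Fin (2n-1)`, then `tᶜ = insert a s`
for some `a ∉ s ∪ t`. -/
lemma odd_aux_compl (n : ℕ) (hn : 3 ≤ n) (s t : Finset (Fin (2 * n - 1)))
    (hs : s.card = n - 1) (ht : t.card = n - 1) (hd : Disjoint s t) :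
    ∃ a, a ∉ s ∧ a ∉ t ∧ tᶜ = insert a s := by
  have hsub : s ⊆ tᶜ := le_compl_iff_disjoint_right.mpr hd
  have hcardc : tᶜ.card = n := by
    rw [Finset.card_compl, ht, Fintype.card_fin]; omega
  have hss : s ⊂ tᶜ := hsub.ssubset_of_ne (by
    intro h; rw [h, hcardc] at hs; omega)
  obtain ⟨a, hat, has⟩ := Finset.exists_of_ssubset hss
  refine ⟨a, has, by simpa using hat, ?_⟩
  have h1 : insert a s ⊆ tᶜ := Finset.insert_subset hat hsub
  have h2 : tᶜ.card ≤ (insert a s).card := by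
    rw [Finset.card_insert_of_notMem has, hs, hcardc]; omega
  exact (Finset.eq_of_subset_of_card_le h1 h2).symm

/-- Every path `v₁v₂v₃v₄` of length 3 in the odd graph `O_n` (`n ≥ 3`) is
contained in a 6-cycle `v₁v₂v₃v₄v₅v₆`. -/
theorem path_in_six_cycle (n : ℕ) (hn : 3 ≤ n)
    (v₁ v₂ v₃ v₄ : {s : Finset (Fin (2 * n - 1)) // s.card = n - 1})
    (h12 : (OddGraph n).Adj v₁ v₂) (h23 : (OddGraph n).Adj v₂ v₃)
    (h34 : (OddGraph n).Adj v₃ v₄)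
    (hpath : [v₁, v₂, v₃, v₄].Pairwise (· ≠ ·)) :
    ∃ v₅ v₆ : {s : Finset (Fin (2 * n - 1)) // s.card = n - 1},
      (OddGraph n).Adj v₄ v₅ ∧ (OddGraph n).Adj v₅ v₆ ∧ (OddGraph n).Adj v₆ v₁ ∧
      [v₁, v₂, v₃, v₄, v₅, v₆].Pairwise (· ≠ ·) := by
  obtain ⟨d12, ne12⟩ := h12
  obtain ⟨d23, ne23⟩ := h23
  obtain ⟨d34, ne34⟩ := h34
  simp only [List.pairwise_cons, List.mem_cons, List.not_mem_nil, or_false,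
    List.mem_singleton, List.Pairwise.nil, and_true, forall_eq_or_imp, forall_eq] at hpath
  have ne13 : v₁ ≠ v₃ := hpath.1.2.1
  have ne14 : v₁ ≠ v₄ := hpath.1.2.2
  have ne24 : v₂ ≠ v₄ := hpath.2.1.2
  -- the element a outside v₁ ∪ v₂
  obtain ⟨a, ha1, ha2, hA⟩ := odd_aux_compl n hn v₁.1 v₂.1 v₁.2 v₂.2 d12
  -- the element c outside v₃ ∪ v₄
  obtain ⟨c, hc4, hc3, hC⟩ := odd_aux_compl n hn v₄.1 v₃.1 v₄.2 v₃.2 d34.symm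
  -- a ∈ v₃
  have ha3 : a ∈ v₃.1 := by
    by_contra ha3
    have hsub : v₃.1 ⊆ v₁.1 := by
      have h : v₃.1 ⊆ v₂.1ᶜ := le_compl_iff_disjoint_right.mpr d23.symm
      rw [hA] at h
      exact fun x hx => (Finset.mem_insert.mp (h hx)).resolve_left
        (fun heq => ha3 (heq ▸ hx))
    exact ne13 (Subtype.ext (Finset.eq_of_subset_of_card_le hsub (by rw [v₁.2, v₃.2])).symm)
  -- c ∈ v₂
  have hc2 : c ∈ v₂.1 := by
    by_contra hc2
    have hsub : v₂.1 ⊆ v₄.1 := by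
      have h : v₂.1 ⊆ v₃.1ᶜ := le_compl_iff_disjoint_right.mpr d23
      rw [hC] at h
      exact fun x hx => (Finset.mem_insert.mp (h hx)).resolve_left
        (fun heq => hc2 (heq ▸ hx))
    exact ne24 (Subtype.ext (Finset.eq_of_subset_of_card_le hsub (by rw [v₂.2, v₄.2])))
  have hac : a ≠ c := fun h => ha2 (h ▸ hc2)
  have hc1 : c ∉ v₁.1 := fun h => (Finset.disjoint_left.mp d12 h) hc2
  have ha4 : a ∉ v₄.1 := fun h => (Finset.disjoint_left.mp d34 ha3) h
  -- define v₅ and v₆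
  set S₅ : Finset (Fin (2 * n - 1)) := insert c (v₃.1.erase a) with hS₅
  set S₆ : Finset (Fin (2 * n - 1)) := insert a (v₂.1.erase c) with hS₆
  have hcard₅ : S₅.card = n - 1 := by
    rw [hS₅, Finset.card_insert_of_notMem (fun h => hc3 (Finset.mem_of_mem_erase h)),
      Finset.card_erase_of_mem ha3, v₃.2]
    omega
  have hcard₆ : S₆.card = n - 1 := by
    rw [hS₆, Finset.card_insert_of_notMem (fun h => ha2 (Finset.mem_of_mem_erase h)),
      Finset.card_erase_of_mem hc2, v₂.2]
    omega
  -- disjointness facts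
  have D45 : Disjoint v₄.1 S₅ := by
    rw [hS₅, Finset.disjoint_insert_right]
    exact ⟨hc4, d34.symm.mono_right (Finset.erase_subset _ _)⟩
  have D56 : Disjoint S₅ S₆ := by
    rw [Finset.disjoint_left]
    intro x hx hx'
    rw [hS₅, Finset.mem_insert, Finset.mem_erase] at hx
    rw [hS₆, Finset.mem_insert, Finset.mem_erase] at hx'
    rcases hx with rfl | ⟨hxa, hx3⟩
    · rcases hx' with h | ⟨h, _⟩
      · exact hac h.symm
      · exact h rfl
    · rcases hx' with rfl | ⟨_, h2⟩
      · exact hxa rfl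
      · exact (Finset.disjoint_left.mp d23.symm hx3) h2
  have D61 : Disjoint S₆ v₁.1 := by
    rw [hS₆, Finset.disjoint_insert_left]
    exact ⟨ha1, d12.symm.mono_left (Finset.erase_subset _ _)⟩
  -- witness elements for distinctness
  have hcS₅ : c ∈ S₅ := Finset.mem_insert_self _ _
  have haS₆ : a ∈ S₆ := Finset.mem_insert_self _ _
  have hcS₆ : c ∉ S₆ := by
    rw [hS₆, Finset.mem_insert, Finset.mem_erase]
    rintro (h | ⟨h, _⟩)
    · exact hac h.symm
    · exact h rfl
  obtain ⟨x, hx⟩ : (v₃.1.erase a).Nonempty := by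
    rw [← Finset.card_pos, Finset.card_erase_of_mem ha3, v₃.2]; omega
  have hx3 : x ∈ v₃.1 := Finset.mem_of_mem_erase hx
  have hxS₅ : x ∈ S₅ := Finset.mem_insert_of_mem hx
  obtain ⟨y, hy⟩ : (v₂.1.erase c).Nonempty := by
    rw [← Finset.card_pos, Finset.card_erase_of_mem hc2, v₂.2]; omega
  have hy2 : y ∈ v₂.1 := Finset.mem_of_mem_erase hy
  have hyS₆ : y ∈ S₆ := Finset.mem_insert_of_mem hy
  -- the distinctness of the new vertices from the old ones
  have n51 : S₅ ≠ v₁.1 := fun h => hc1 (h ▸ hcS₅)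
  have n52 : S₅ ≠ v₂.1 := fun h => (Finset.disjoint_left.mp d23.symm hx3) (h ▸ hxS₅)
  have n53 : S₅ ≠ v₃.1 := fun h => hc3 (h ▸ hcS₅)
  have n54 : S₅ ≠ v₄.1 := fun h => hc4 (h ▸ hcS₅)
  have n61 : S₆ ≠ v₁.1 := fun h => ha1 (h ▸ haS₆)
  have n62 : S₆ ≠ v₂.1 := fun h => ha2 (h ▸ haS₆)
  have n63 : S₆ ≠ v₃.1 := fun h => (Finset.disjoint_left.mp d23 hy2) (h ▸ hyS₆)
  have n64 : S₆ ≠ v₄.1 := fun h => ha4 (h ▸ haS₆)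
  have n56 : S₅ ≠ S₆ := fun h => hcS₆ (h ▸ hcS₅)
  refine ⟨⟨S₅, hcard₅⟩, ⟨S₆, hcard₆⟩,
    ⟨D45, fun h => n54 (congrArg Subtype.val h).symm⟩,
    ⟨D56, fun h => n56 (congrArg Subtype.val h)⟩,
    ⟨D61, fun h => n61 (congrArg Subtype.val h)⟩, ?_⟩
  have m51 : (⟨S₅, hcard₅⟩ : {s : Finset (Fin (2 * n - 1)) // s.card = n - 1}) ≠ v₁ :=
    fun h => n51 (congrArg Subtype.val h)
  have m52 : (⟨S₅, hcard₅⟩ : {s : Finset (Fin (2 * n - 1)) // s.card = n - 1}) ≠ v₂ :=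
    fun h => n52 (congrArg Subtype.val h)
  have m53 : (⟨S₅, hcard₅⟩ : {s : Finset (Fin (2 * n - 1)) // s.card = n - 1}) ≠ v₃ :=
    fun h => n53 (congrArg Subtype.val h)
  have m54 : (⟨S₅, hcard₅⟩ : {s : Finset (Fin (2 * n - 1)) // s.card = n - 1}) ≠ v₄ :=
    fun h => n54 (congrArg Subtype.val h)
  have m61 : (⟨S₆, hcard₆⟩ : {s : Finset (Fin (2 * n - 1)) // s.card = n - 1}) ≠ v₁ :=
    fun h => n61 (congrArg Subtype.val h)
  have m62 : (⟨S₆, hcard₆⟩ : {s : Finset (Fin (2 * n - 1)) // s.card = n - 1}) ≠ v₂ :=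
    fun h => n62 (congrArg Subtype.val h)
  have m63 : (⟨S₆, hcard₆⟩ : {s : Finset (Fin (2 * n - 1)) // s.card = n - 1}) ≠ v₃ :=
    fun h => n63 (congrArg Subtype.val h)
  have m64 : (⟨S₆, hcard₆⟩ : {s : Finset (Fin (2 * n - 1)) // s.card = n - 1}) ≠ v₄ :=
    fun h => n64 (congrArg Subtype.val h)
  have m56 : (⟨S₅, hcard₅⟩ : {s : Finset (Fin (2 * n - 1)) // s.card = n - 1}) ≠
      ⟨S₆, hcard₆⟩ := fun h => n56 (congrArg Subtype.val h)
  simp only [List.pairwise_cons, List.mem_cons, List.not_mem_nil, or_false,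
    List.mem_singleton, List.Pairwise.nil, and_true, forall_eq_or_imp, forall_eq]
  exact ⟨⟨ne12, ne13, ne14, m51.symm, m61.symm⟩, ⟨ne23, ne24, m52.symm, m62.symm⟩,
    ⟨ne34, m53.symm, m63.symm⟩, ⟨m54.symm, m64.symm⟩, m56, fun _ h => h.elim⟩
end

section
/- Let n ≥ 4. Given two vertices w_0 and w_{2n} (not necessarily distinct) of the odd graph O_n, and elements λ_1 ∉ [w_0] and λ_2 ∉ [w_{2n}], there exists a special walk of length exactly 2n from w_0 to w_{2n} in O_n whose first edge is labeled with λ_1 and whose last edge is labeled with λ_2. -/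
/-- The edge `uv` of the odd graph is labeled with `lab` iff `lab` lies in
neither `[u]` nor `[v]` (for an edge this element is unique). -/
def EdgeLabeled {n : ℕ} (u v : {s : Finset (Fin (2 * n - 1)) // s.card = n - 1})
    (lab : Fin (2 * n - 1)) : Prop :=
  lab ∉ u.1 ∧ lab ∉ v.1

/-- A special walk: every two consecutive edges are distinct, i.e. there is no
immediate backtracking. -/
def IsSpecialWalk {V : Type*} {G : SimpleGraph V} {u v : V} (p : G.Walk u v) : Prop :=
  ∀ i, i + 2 ≤ p.length → p.getVert i ≠ p.getVert (i + 2)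


open Finset

section M
set_option linter.unusedSectionVars false
variable {α : Type*} [DecidableEq α] [Fintype α]

def nxt (v : Finset α) (l : α) : Finset α := (Finset.univ \ v).erase l

lemma card_nxt {k : ℕ} (hcard : Fintype.card α = 2*k+1) {v : Finset α} (hv : v.card = k)
    {l : α} (hl : l ∉ v) : (nxt v l).card = k := by
  have h1 : (Finset.univ \ v).card = k + 1 := by
    rw [Finset.card_sdiff_of_subset (Finset.subset_univ v), Finset.card_univ, hcard, hv]; omega
  have hm : l ∈ Finset.univ \ v := by simp [hl]
  rw [nxt, Finset.card_erase_of_mem hm, h1]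
  omega

lemma mem_nxt {v : Finset α} {l x : α} : x ∈ nxt v l ↔ x ≠ l ∧ x ∉ v := by
  simp [nxt]

def chainSets (v : Finset α) (L : List α) : Finset α := L.foldl nxt v

@[simp] lemma chainSets_nil (v : Finset α) : chainSets v [] = v := rfl
@[simp] lemma chainSets_cons (v : Finset α) (l : α) (L : List α) :
    chainSets v (l :: L) = chainSets (nxt v l) L := rfl

lemma chainSets_append (v : Finset α) (L₁ L₂ : List α) :
    chainSets v (L₁ ++ L₂) = chainSets (chainSets v L₁) L₂ := List.foldl_append

def LValid (v : Finset α) : List α → Prop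
  | [] => True
  | l :: L => l ∉ v ∧ LValid (nxt v l) L

lemma nxt_nxt (v : Finset α) (a b : α) :
    nxt (nxt v a) b = (insert a v).erase b := by
  ext x; simp [nxt]; tauto

lemma LValid_card {k : ℕ} (hcard : Fintype.card α = 2*k+1) :
    ∀ (L : List α) (v : Finset α), LValid v L → v.card = k → (chainSets v L).card = k := by
  intro L
  induction L with
  | nil => intro v _ hv; simpa
  | cons l L ih =>
      intro v hval hv
      rw [chainSets_cons]
      exact ih (nxt v l) hval.2 (card_nxt hcard hv hval.1)

lemma LValid_getElem : ∀ (L : List α) (v : Finset α), LValid v L →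
    ∀ i (hi : i < L.length), L[i] ∉ chainSets v (L.take i) := by
  intro L
  induction L with
  | nil => intro v _ i hi; simp at hi
  | cons l L ih =>
      intro v hval i hi
      cases i with
      | zero => simpa using hval.1
      | succ j => simpa using ih (nxt v l) hval.2 j (by simpa using hi)

lemma take_two_step (L : List α) (i : ℕ) (h : i + 2 ≤ L.length) :
    L.take (i+2) = L.take i ++ [L[i]'(by omega), L[i+1]'(by omega)] := by
  rw [List.take_succ]
  rw [List.take_succ]
  rw [List.getElem?_eq_getElem (show i < L.length by omega),
    List.getElem?_eq_getElem (show i+1 < L.length by omega)]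
  simp only [Option.toList_some, List.append_assoc, List.singleton_append]

lemma chainSets_ne (L : List α) (v : Finset α) (hval : LValid v L)
    (hch : L.Chain' (· ≠ ·)) (i : ℕ) (h : i + 2 ≤ L.length) :
    chainSets v (L.take i) ≠ chainSets v (L.take (i+2)) := by
  have ha : L[i]'(by omega) ∉ chainSets v (L.take i) := LValid_getElem L v hval i (by omega)
  have hne : L[i]'(by omega) ≠ L[i+1]'(by omega) := List.isChain_iff_getElem.1 hch i (by omega)
  rw [take_two_step L i h, chainSets_append]
  set w := chainSets v (L.take i)
  show w ≠ chainSets w [L[i]'(by omega), L[i+1]'(by omega)]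
  simp only [chainSets_cons, chainSets_nil]
  rw [nxt_nxt]
  intro heq
  have : L[i]'(by omega) ∈ w := by
    rw [heq]; exact Finset.mem_erase.2 ⟨hne, Finset.mem_insert_self _ _⟩
  exact ha this

end M

section M2
set_option linter.unusedSectionVars false
variable {α : Type*} [DecidableEq α] [Fintype α]

def stp (v : Finset α) (p : α × α) : Finset α := (insert p.1 v).erase p.2

def SValid (v : Finset α) : List (α × α) → Prop
  | [] => True
  | p :: l => p.1 ∉ v ∧ p.2 ∈ v ∧ SValid (stp v p) l

def labs : List (α × α) → List α
  | [] => []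
  | p :: l => p.1 :: p.2 :: labs l

@[simp] lemma labs_length : ∀ (l : List (α × α)), (labs l).length = 2 * l.length
  | [] => rfl
  | p :: l => by simp [labs, labs_length l]; omega

lemma labs_getElem_snd : ∀ (l : List (α × α)) (i : ℕ) (h : i < l.length),
    (labs l)[2*i+1]'(by rw [labs_length]; omega) = (l[i]).2
  | p :: l, 0, _ => rfl
  | p :: l, (i+1), h => by
      have h2 : 2*(i+1)+1 = ((2*i+1)+1)+1 := by omega
      simp only [labs, h2, List.getElem_cons_succ]
      exact labs_getElem_snd l i (by simpa using h)

lemma svalid_labs : ∀ (l : List (α × α)) (v : Finset α), SValid v l →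
    l.Chain' (fun p q => p.2 ≠ q.1) →
    LValid v (labs l) ∧ (labs l).Chain' (· ≠ ·) ∧ chainSets v (labs l) = l.foldl stp v := by
  intro l
  induction l with
  | nil => intro v _ _; exact ⟨trivial, by simp [labs, List.Chain'], rfl⟩
  | cons p l ih =>
      intro v hval hch
      obtain ⟨h1, h2, h3⟩ := hval
      have hstp : nxt (nxt v p.1) p.2 = stp v p := nxt_nxt v p.1 p.2
      have hch' : l.Chain' (fun p q => p.2 ≠ q.1) := hch.tail
      obtain ⟨ih1, ih2, ih3⟩ := ih (stp v p) h3 hch'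
      have hb : p.2 ∉ nxt v p.1 := by rw [mem_nxt]; tauto
      refine ⟨⟨h1, hb, by rw [hstp]; exact ih1⟩, ?_, ?_⟩
      · -- Chain'
        rw [labs]
        refine List.isChain_cons_cons.2 ⟨fun h => h1 (h ▸ h2), ?_⟩
        refine List.isChain_cons.2 ⟨?_, ih2⟩
        intro y hy
        cases l with
        | nil => simp [labs] at hy
        | cons q l' =>
            have : y = q.1 := by simp [labs] at hy; exact hy.symm
            rw [this]
            exact (List.isChain_cons_cons.1 hch).1
      · show chainSets v (p.1 :: p.2 :: labs l) = _
        simp only [chainSets_cons, List.foldl_cons]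
        rw [hstp]
        exact ih3

end M2

section M3
set_option linter.unusedSectionVars false

lemma exists_walk (n : ℕ) (hn : 2 ≤ n) :
    ∀ (L : List (Fin (2*n-1))) (u w : {s : Finset (Fin (2*n-1)) // s.card = n-1}),
      LValid u.1 L → chainSets u.1 L = w.1 →
      ∃ p : (OddGraph n).Walk u w, p.length = L.length ∧
        ∀ i, (p.getVert i).1 = chainSets u.1 (L.take i) := by
  intro L
  induction L with
  | nil =>
      intro u w _ hcs
      have : u = w := Subtype.ext hcs
      subst this
      exact ⟨.nil, rfl, fun i => by rw [List.take_nil]; rfl⟩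
  | cons l L ih =>
      intro u w hval hcs
      have hcard : Fintype.card (Fin (2*n-1)) = 2*(n-1)+1 := by
        simp [Fintype.card_fin]; omega
      have hu' : (nxt u.1 l).card = n-1 := card_nxt hcard u.2 hval.1
      let u' : {s : Finset (Fin (2*n-1)) // s.card = n-1} := ⟨nxt u.1 l, hu'⟩
      have hdisj : Disjoint u.1 u'.1 := by
        have h1 : Disjoint (Finset.univ \ u.1) u.1 := Finset.sdiff_disjoint
        exact (h1.mono_left (Finset.erase_subset _ _)).symm
      have hadj : (OddGraph n).Adj u u' := by
        refine ⟨hdisj, fun he => ?_⟩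
        have hv : u.1 = u'.1 := congrArg Subtype.val he
        have hd2 : Disjoint u.1 u.1 := by nth_rewrite 2 [hv]; exact hdisj
        have hemp : u.1 = ⊥ := disjoint_self.1 hd2
        have hcc := u.2
        rw [hemp] at hcc
        simp [Finset.bot_eq_empty] at hcc
        omega
      obtain ⟨p, hlen, hgv⟩ := ih u' w hval.2 hcs
      refine ⟨.cons hadj p, by simp [hlen], fun i => ?_⟩
      cases i with
      | zero => simp
      | succ j =>
          rw [SimpleGraph.Walk.getVert_cons_succ]
          simpa using hgv j

end M3

section M4
set_option linter.unusedSectionVars false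
set_option maxHeartbeats 1000000
variable {α : Type*} [DecidableEq α] [Fintype α]

lemma master : ∀ (l₁ l₂ : List α) (v : Finset α), l₁.length = l₂.length →
    l₁.Nodup → l₂.Nodup →
    (∀ x ∈ l₁, x ∉ l₂ → x ∉ v) →
    (∀ x ∈ l₂, x ∉ l₁ → x ∈ v) →
    (∀ x ∈ l₁, x ∈ l₂ →
      (x ∉ v ∧ l₁.idxOf x < l₂.idxOf x) ∨ (x ∈ v ∧ l₂.idxOf x + 2 ≤ l₁.idxOf x)) →
    SValid v (l₁.zip l₂) ∧ (l₁.zip l₂).Chain' (fun p q => p.2 ≠ q.1) ∧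
      (l₁.zip l₂).foldl stp v = (v \ l₂.toFinset) ∪ (l₁.toFinset \ (l₂.toFinset \ v)) := by
  intro l₁
  induction l₁ with
  | nil =>
      intro l₂ v hlen _ _ _ _ _
      have : l₂ = [] := by cases l₂ <;> simp_all
      subst this
      refine ⟨trivial, by simp [List.Chain'], by simp⟩
  | cons a l₁ ih =>
      intro l₂ v hlen hn₁ hn₂ H1 H2 H3
      cases l₂ with
      | nil => simp at hlen
      | cons b l₂ =>
        have hal₁ : a ∉ l₁ := (List.nodup_cons.1 hn₁).1
        have hbl₂ : b ∉ l₂ := (List.nodup_cons.1 hn₂).1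
        have hab : a ≠ b := by
          intro h
          rcases H3 a (by simp) (by simp [h]) with ⟨_, hlt⟩ | ⟨_, hle⟩
          · rw [List.idxOf_cons_self, h, List.idxOf_cons_self] at hlt; omega
          · rw [List.idxOf_cons_self, h, List.idxOf_cons_self] at hle; omega
        have hav : a ∉ v := by
          by_cases hmem : a ∈ b :: l₂
          · rcases H3 a (by simp) hmem with ⟨h, _⟩ | ⟨_, hle⟩
            · exact h
            · rw [List.idxOf_cons_self] at hle; omega
          · exact H1 a (by simp) hmem
        have hbv : b ∈ v := by
          by_cases hmem : b ∈ a :: l₁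
          · rcases H3 b hmem (by simp) with ⟨_, hlt⟩ | ⟨h, _⟩
            · rw [List.idxOf_cons_self] at hlt; omega
            · exact h
          · exact H2 b (by simp) hmem
        -- b ∈ l₁ implies idxOf bound facts
        have hb_in_l₁ : b ∈ l₁ → 2 ≤ (a :: l₁).idxOf b := by
          intro hmem
          rcases H3 b (by simp [hmem]) (by simp) with ⟨_, hlt⟩ | ⟨_, hle⟩
          · rw [List.idxOf_cons_self] at hlt; omega
          · rw [List.idxOf_cons_self] at hle; exact hle
        set v' : Finset α := stp v (a, b) with hv'
        have hv'mem : ∀ x, x ∈ v' ↔ (x ≠ b ∧ (x = a ∨ x ∈ v)) := by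
          intro x; simp [hv', stp]
        have H1' : ∀ x ∈ l₁, x ∉ l₂ → x ∉ v' := by
          intro x hx hx2
          rw [hv'mem]
          by_cases hxb : x = b
          · tauto
          · have hxa : x ≠ a := fun h => hal₁ (h ▸ hx)
            have : x ∉ v := H1 x (by simp [hx]) (by simp [hxb, hx2])
            tauto
        have H2' : ∀ x ∈ l₂, x ∉ l₁ → x ∈ v' := by
          intro x hx hx1
          rw [hv'mem]
          by_cases hxa : x = a
          · exact ⟨hxa ▸ hab, Or.inl hxa⟩
          · have hxb : x ≠ b := fun h => hbl₂ (h ▸ hx)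
            have : x ∈ v := H2 x (by simp [hx]) (by simp [hxa, hx1])
            exact ⟨hxb, Or.inr this⟩
        have H3' : ∀ x ∈ l₁, x ∈ l₂ →
            (x ∉ v' ∧ l₁.idxOf x < l₂.idxOf x) ∨ (x ∈ v' ∧ l₂.idxOf x + 2 ≤ l₁.idxOf x) := by
          intro x hx1 hx2
          have hxa : x ≠ a := fun h => hal₁ (h ▸ hx1)
          have hxb : x ≠ b := fun h => hbl₂ (h ▸ hx2)
          have e1 : (a :: l₁).idxOf x = l₁.idxOf x + 1 := by
            rw [List.idxOf_cons_ne _ (Ne.symm hxa)]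
          have e2 : (b :: l₂).idxOf x = l₂.idxOf x + 1 := by
            rw [List.idxOf_cons_ne _ (Ne.symm hxb)]
          have hxv' : x ∈ v' ↔ x ∈ v := by rw [hv'mem]; tauto
          rcases H3 x (by simp [hx1]) (by simp [hx2]) with ⟨h1, h2⟩ | ⟨h1, h2⟩
          · left; rw [e1, e2] at h2; exact ⟨fun h => h1 (hxv'.1 h), by omega⟩
          · right; rw [e1, e2] at h2; exact ⟨hxv'.2 h1, by omega⟩
        obtain ⟨ihS, ihC, ihR⟩ := ih l₂ v' (by simpa using hlen)
          (List.nodup_cons.1 hn₁).2 (List.nodup_cons.1 hn₂).2 H1' H2' H3'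
        refine ⟨⟨hav, hbv, ihS⟩, ?_, ?_⟩
        · -- Chain'
          refine List.isChain_cons.2 ⟨?_, ihC⟩
          intro q hq
          cases l₁ with
          | nil => simp at hq
          | cons a₂ l₁' =>
            cases l₂ with
            | nil => simp at hlen
            | cons b₂ l₂' =>
              rw [List.zipWith_cons_cons, List.head?_cons] at hq
              obtain rfl : (a₂, b₂) = q := by simpa using hq
              show b ≠ a₂
              intro h
              have h2 : 2 ≤ (a :: a₂ :: l₁').idxOf b := hb_in_l₁ (by simp [h])
              have : (a :: a₂ :: l₁').idxOf b = 1 := by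
                rw [List.idxOf_cons_ne _ hab, ← h, List.idxOf_cons_self]
              omega
        · -- run formula
          show List.foldl stp v ((a, b) :: l₁.zip l₂) = _
          rw [List.foldl_cons, ihR]
          have hbv' : b ∉ v' := by rw [hv'mem]; tauto
          have hav' : a ∈ v' ↔ True := by rw [hv'mem]; tauto
          ext x
          simp only [Finset.mem_union, Finset.mem_sdiff, List.toFinset_cons, Finset.mem_insert,
            List.mem_toFinset, hv'mem]
          by_cases hxa : x = a <;> by_cases hxb : x = b
          · exact absurd (hxa.symm.trans hxb) hab
          · subst hxa
            by_cases hal₂ : x ∈ l₂ <;> simp [hal₂, hal₁, hav, hab] <;> tauto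
          · subst hxb
            by_cases hbl₁ : x ∈ l₁ <;> simp [hbl₁, hbl₂, hbv, hab] <;> tauto
          · simp [hxa, hxb] <;> tauto
  
end M4


/-- Given vertices `w₀, w₂ₙ` of `O_n` (`n ≥ 4`) with `λ₁ ∉ [w₀]` and
`λ₂ ∉ [w₂ₙ]`, there is a special walk of length `2n` from `w₀` to `w₂ₙ` whose
first edge is labeled `λ₁` and whose last edge is labeled `λ₂`. -/
theorem special_walk_2n (n : ℕ) (hn : 4 ≤ n)
    (w₀ w₂ₙ : {s : Finset (Fin (2 * n - 1)) // s.card = n - 1})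
    (lab₁ lab₂ : Fin (2 * n - 1)) (h₁ : lab₁ ∉ w₀.1) (h₂ : lab₂ ∉ w₂ₙ.1) :
    ∃ p : (OddGraph n).Walk w₀ w₂ₙ, p.length = 2 * n ∧ IsSpecialWalk p ∧
      EdgeLabeled w₀ (p.getVert 1) lab₁ ∧
      EdgeLabeled (p.getVert (p.length - 1)) w₂ₙ lab₂ := by
  classical
  set A := w₀.1 with hAdef
  set B := w₂ₙ.1 with hBdef
  set D := A \ B with hDdef
  set E := B \ A with hEdef
  set C : Finset (Fin (2*n-1)) := Finset.univ \ (A ∪ B) with hCdef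
  set d := D.card with hddef
  have hA : A.card = n - 1 := w₀.2
  have hB : B.card = n - 1 := w₂ₙ.2
  have huniv : (Finset.univ : Finset (Fin (2*n-1))).card = 2*n-1 := by
    simp
  have hdle : d ≤ n - 1 := by
    rw [hddef]; exact le_trans (Finset.card_le_card Finset.sdiff_subset) hA.le
  have hE : E.card = d := by
    rw [hEdef, hddef, hDdef, Finset.card_sdiff_comm (hB.trans hA.symm)]
  have hGcard : (A ∩ B).card = n - 1 - d := by
    have h8 := Finset.card_inter_add_card_sdiff A B
    rw [← hDdef, ← hddef] at h8
    omega
  have hCcard : C.card = n - d := by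
    have h5 := Finset.card_union_add_card_inter A B
    have h6 : C.card = (2*n-1) - (A ∪ B).card := by
      rw [hCdef, Finset.card_sdiff_of_subset (Finset.subset_univ _), huniv]
    have h7 := Finset.card_le_card (Finset.subset_univ (A ∪ B))
    rw [huniv] at h7
    omega
  have hCmem : ∀ x, x ∈ C ↔ x ∉ A ∧ x ∉ B := by
    intro x; simp [hCdef]
  have hl1EC : lab₁ ∈ E ∨ lab₁ ∈ C := by
    by_cases hb : lab₁ ∈ B
    · left; rw [hEdef, Finset.mem_sdiff]; exact ⟨hb, h₁⟩
    · right; rw [hCmem]; exact ⟨h₁, hb⟩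
  have hl2DC : lab₂ ∈ D ∨ lab₂ ∈ C := by
    by_cases hb : lab₂ ∈ A
    · left; rw [hDdef, Finset.mem_sdiff]; exact ⟨hb, h₂⟩
    · right; rw [hCmem]; exact ⟨hb, h₂⟩
  have hDsub : ∀ x ∈ D, x ∈ A ∧ x ∉ B := by intro x hx; rw [hDdef, Finset.mem_sdiff] at hx; exact hx
  have hEsub : ∀ x ∈ E, x ∈ B ∧ x ∉ A := by intro x hx; rw [hEdef, Finset.mem_sdiff] at hx; exact hx
  -- choose the churn set T
  obtain ⟨T, hTsub, hT1, hT2le, hT2, hl1T, hl2T, hsum⟩ :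
      ∃ T : Finset (Fin (2*n-1)), T ⊆ C ∧ 1 ≤ T.card ∧ T.card ≤ 2 ∧
        (T.card = 2 → lab₁ ∈ T ∧ lab₂ ∈ T) ∧ (lab₁ ∈ E ∨ lab₁ ∈ T) ∧
        (lab₂ ∈ D ∨ lab₂ ∈ T) ∧ 2 ≤ d + T.card := by
    by_cases h1 : lab₁ ∈ C
    · by_cases h2 : lab₂ ∈ C
      · by_cases h12 : lab₁ = lab₂
        · by_cases hd : 1 ≤ d
          · exact ⟨{lab₁}, by simpa using h1, by simp, by simp, by simp,
              Or.inr (by simp), Or.inr (by simp [h12]), by rw [Finset.card_singleton]; omega⟩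
          · have hne : (C.erase lab₁).Nonempty := by
              rw [← Finset.card_pos, Finset.card_erase_of_mem h1, hCcard]; omega
            obtain ⟨c', hc'⟩ := hne
            have hc'C : c' ∈ C := Finset.mem_of_mem_erase hc'
            have hc'ne : lab₁ ≠ c' := (Finset.ne_of_mem_erase hc').symm
            have hp : ({lab₁, c'} : Finset (Fin (2*n-1))).card = 2 := Finset.card_pair hc'ne
            refine ⟨{lab₁, c'}, ?_, by omega, by omega, ?_, Or.inr (by simp),
              Or.inr (by simp [h12]), by omega⟩
            · intro x hx; simp at hx; rcases hx with rfl | rfl <;> assumption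
            · intro _; exact ⟨by simp, by simp [h12]⟩
        · have hp : ({lab₁, lab₂} : Finset (Fin (2*n-1))).card = 2 := Finset.card_pair h12
          refine ⟨{lab₁, lab₂}, ?_, by omega, by omega, ?_, Or.inr (by simp),
            Or.inr (by simp), by omega⟩
          · intro x hx; simp at hx; rcases hx with rfl | rfl <;> assumption
          · intro _; exact ⟨by simp, by simp⟩
      · have hd2 : lab₂ ∈ D := hl2DC.resolve_right h2
        have hd1 : 1 ≤ d := by
          rw [hddef]; exact Finset.card_pos.2 ⟨lab₂, hd2⟩
        exact ⟨{lab₁}, by simpa using h1, by simp, by simp, by simp,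
          Or.inr (by simp), Or.inl hd2, by rw [Finset.card_singleton]; omega⟩
    · have he1 : lab₁ ∈ E := hl1EC.resolve_right h1
      have hd1 : 1 ≤ d := by
        rw [← hE]; exact Finset.card_pos.2 ⟨lab₁, he1⟩
      by_cases h2 : lab₂ ∈ C
      · exact ⟨{lab₂}, by simpa using h2, by simp, by simp, by simp,
          Or.inl he1, Or.inr (by simp), by rw [Finset.card_singleton]; omega⟩
      · have hd2 : lab₂ ∈ D := hl2DC.resolve_right h2
        have hCne : C.Nonempty := by rw [← Finset.card_pos, hCcard]; omega
        obtain ⟨c, hc⟩ := hCne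
        exact ⟨{c}, by simpa using hc, by simp, by simp, by simp,
          Or.inl he1, Or.inl hd2, by rw [Finset.card_singleton]; omega⟩
  have hTnot : ∀ x ∈ T, x ∉ A ∧ x ∉ B := fun x hx => (hCmem x).1 (hTsub hx)
  have hTcardle : T.card ≤ n - d := by rw [← hCcard]; exact Finset.card_le_card hTsub
  -- choose Gs
  obtain ⟨Gs, hGssub, hGscard⟩ := Finset.exists_subset_card_eq (s := A ∩ B) (n := n - d - T.card)
    (by omega)
  have hGs : ∀ x ∈ Gs, x ∈ A ∧ x ∈ B := by
    intro x hx; have := hGssub hx; rw [Finset.mem_inter] at this; exact this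
  -- the lists
  set Pl : List (Fin (2*n-1)) := lab₁ :: (T.erase lab₁).toList with hPl
  set El : List (Fin (2*n-1)) := (E.erase lab₁).toList with hEl
  set Gl : List (Fin (2*n-1)) := Gs.toList with hGl
  set Fl : List (Fin (2*n-1)) := (D.erase lab₂).toList with hFl
  set Sl : List (Fin (2*n-1)) := (T.erase lab₂).toList ++ [lab₂] with hSl
  set adds : List (Fin (2*n-1)) := Pl ++ (El ++ Gl) with hadds
  set rems : List (Fin (2*n-1)) := (Gl ++ Fl) ++ Sl with hrems
  -- membership characterizations
  have hmPl : ∀ x, x ∈ Pl ↔ (x = lab₁ ∨ x ∈ T) := by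
    intro x
    rw [hPl]
    simp only [List.mem_cons, Finset.mem_toList, Finset.mem_erase]
    constructor
    · rintro (rfl | ⟨_, h⟩)
      · left; rfl
      · right; exact h
    · rintro (rfl | h)
      · left; rfl
      · by_cases hx : x = lab₁
        · left; exact hx
        · right; exact ⟨hx, h⟩
  have hmSl : ∀ x, x ∈ Sl ↔ (x = lab₂ ∨ x ∈ T) := by
    intro x
    rw [hSl]
    simp only [List.mem_append, List.mem_singleton, Finset.mem_toList, Finset.mem_erase]
    constructor
    · rintro (⟨_, h⟩ | rfl)
      · right; exact h
      · left; rfl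
    · rintro (rfl | h)
      · right; rfl
      · by_cases hx : x = lab₂
        · right; exact hx
        · left; exact ⟨hx, h⟩
  have hmadds : ∀ x, x ∈ adds ↔ (x ∈ T ∨ x ∈ E ∨ x ∈ Gs) := by
    intro x
    rw [hadds]
    simp only [List.mem_append, hmPl, Finset.mem_toList, Finset.mem_erase, hEl, hGl]
    constructor
    · rintro ((rfl | h) | ⟨_, h⟩ | h)
      · rcases hl1T with h | h
        · right; left; exact h
        · left; exact h
      · left; exact h
      · right; left; exact h
      · right; right; exact h
    · rintro (h | h | h)
      · left; right; exact h
      · by_cases hx : x = lab₁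
        · left; left; exact hx
        · right; left; exact ⟨hx, h⟩
      · right; right; exact h
  have hmrems : ∀ x, x ∈ rems ↔ (x ∈ Gs ∨ x ∈ D ∨ x ∈ T) := by
    intro x
    rw [hrems]
    simp only [List.mem_append, hmSl, Finset.mem_toList, Finset.mem_erase, hFl, hGl]
    constructor
    · rintro ((h | ⟨_, h⟩) | rfl | h)
      · left; exact h
      · right; left; exact h
      · rcases hl2T with h | h
        · right; left; exact h
        · right; right; exact h
      · right; right; exact h
    · rintro (h | h | h)
      · left; left; exact h
      · by_cases hx : x = lab₂
        · right; left; exact hx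
        · left; right; exact ⟨hx, h⟩
      · right; right; exact h
  -- numeric facts
  have hxor1 : ¬(lab₁ ∈ T ∧ lab₁ ∈ E) := by
    rintro ⟨h1, h2⟩; exact ((hTnot _ h1).2) (hEsub _ h2).1
  have hxor2 : ¬(lab₂ ∈ T ∧ lab₂ ∈ D) := by
    rintro ⟨h1, h2⟩; exact ((hTnot _ h1).1) (hDsub _ h2).1
  have hPllen : Pl.length = 1 + (T.erase lab₁).card := by
    rw [hPl]; simp [Finset.length_toList]; omega
  have hEllen : El.length = (E.erase lab₁).card := by rw [hEl]; simp [Finset.length_toList]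
  have hGllen : Gl.length = n - d - T.card := by rw [hGl]; simp [Finset.length_toList, hGscard]
  have hFllen : Fl.length = (D.erase lab₂).card := by rw [hFl]; simp [Finset.length_toList]
  have hSllen : Sl.length = (T.erase lab₂).card + 1 := by
    rw [hSl]; simp [Finset.length_toList]
  have hPlEl : Pl.length + El.length = T.card + d := by
    rcases hl1T with h | h
    · have h' : lab₁ ∉ T := fun hc => hxor1 ⟨hc, h⟩
      have e1 : T.erase lab₁ = T := Finset.erase_eq_of_notMem h'
      have e2 : (E.erase lab₁).card = E.card - 1 := Finset.card_erase_of_mem h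
      have e3 : 1 ≤ E.card := Finset.card_pos.2 ⟨lab₁, h⟩
      rw [hPllen, hEllen, e1, e2, hE]
      rw [hE] at e3
      omega
    · have h' : lab₁ ∉ E := fun hc => hxor1 ⟨h, hc⟩
      have e1 : E.erase lab₁ = E := Finset.erase_eq_of_notMem h'
      have e2 : (T.erase lab₁).card = T.card - 1 := Finset.card_erase_of_mem h
      rw [hPllen, hEllen, e1, e2, hE]
      omega
  have hFlSl : Fl.length + Sl.length = T.card + d := by
    rcases hl2T with h | h
    · have h' : lab₂ ∉ T := fun hc => hxor2 ⟨hc, h⟩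
      have e1 : T.erase lab₂ = T := Finset.erase_eq_of_notMem h'
      have e2 : (D.erase lab₂).card = D.card - 1 := Finset.card_erase_of_mem h
      have e3 : 1 ≤ D.card := Finset.card_pos.2 ⟨lab₂, h⟩
      rw [hFllen, hSllen, e1, e2, ← hddef]
      rw [← hddef] at e3
      omega
    · have h' : lab₂ ∉ D := fun hc => hxor2 ⟨h, hc⟩
      have e1 : D.erase lab₂ = D := Finset.erase_eq_of_notMem h'
      have e2 : (T.erase lab₂).card = T.card - 1 := Finset.card_erase_of_mem h
      rw [hFllen, hSllen, e1, e2, ← hddef]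
      omega
  have haddslen : adds.length = n := by
    rw [hadds]
    simp only [List.length_append]
    omega
  have hremslen : rems.length = n := by
    rw [hrems]
    simp only [List.length_append]
    omega
  have hkey : Pl.length ≤ Gl.length + Fl.length := by
    by_cases h2c : T.card = 2
    · obtain ⟨ha1, ha2⟩ := hT2 h2c
      have e1 : (T.erase lab₁).card = 1 := by rw [Finset.card_erase_of_mem ha1, h2c]
      have e2 : lab₂ ∉ D := fun hc => hxor2 ⟨ha2, hc⟩
      have e3 : D.erase lab₂ = D := Finset.erase_eq_of_notMem e2
      rw [hPllen, hGllen, hFllen, e3, ← hddef, e1, h2c]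
      omega
    · have e1 : (T.erase lab₁).card ≤ 1 := by
        have := Finset.card_erase_le (s := T) (a := lab₁)
        omega
      have e2 : d - 1 ≤ (D.erase lab₂).card := by
        have := Finset.card_erase_le (s := D) (a := lab₂)
        have h3 := Finset.pred_card_le_card_erase (s := D) (a := lab₂)
        omega
      rw [hPllen, hGllen, hFllen]
      omega
  -- nodup facts
  have hndadds : adds.Nodup := by
    rw [hadds, List.nodup_append, List.nodup_append]
    refine ⟨?_, ⟨Finset.nodup_toList _, Finset.nodup_toList _, ?_⟩, ?_⟩
    · rw [hPl, List.nodup_cons]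
      exact ⟨by simp, Finset.nodup_toList _⟩
    · rintro x hx1 _ hx2 rfl
      rw [hEl, Finset.mem_toList, Finset.mem_erase] at hx1
      rw [hGl, Finset.mem_toList] at hx2
      exact (hEsub _ hx1.2).2 (hGs _ hx2).1
    · rintro x hx1 _ hx2 rfl
      rw [hmPl] at hx1
      rw [List.mem_append, hEl, hGl, Finset.mem_toList, Finset.mem_toList] at hx2
      rcases hx1 with rfl | hx1
      · rcases hx2 with h | h
        · exact (Finset.mem_erase.1 h).1 rfl
        · exact h₁ (hGs _ h).1
      · rcases hx2 with h | h
        · exact (hTnot _ hx1).2 (hEsub _ (Finset.mem_erase.1 h).2).1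
        · exact (hTnot _ hx1).1 (hGs _ h).1
  have hndrems : rems.Nodup := by
    rw [hrems, List.nodup_append, List.nodup_append]
    refine ⟨⟨Finset.nodup_toList _, Finset.nodup_toList _, ?_⟩, ?_, ?_⟩
    · rintro x hx1 _ hx2 rfl
      rw [hGl, Finset.mem_toList] at hx1
      rw [hFl, Finset.mem_toList, Finset.mem_erase] at hx2
      exact (hDsub _ hx2.2).2 (hGs _ hx1).2
    · rw [hSl, List.nodup_append]
      refine ⟨Finset.nodup_toList _, List.nodup_singleton _, ?_⟩
      rintro x hx1 _ hx2 rfl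
      rw [Finset.mem_toList, Finset.mem_erase] at hx1
      rw [List.mem_singleton] at hx2
      exact hx1.1 hx2
    · rintro x hx1 _ hx2 rfl
      rw [hmSl] at hx2
      rw [List.mem_append, hGl, hFl, Finset.mem_toList, Finset.mem_toList] at hx1
      rcases hx2 with rfl | hx2
      · rcases hx1 with h | h
        · exact h₂ (hGs _ h).2
        · exact (Finset.mem_erase.1 h).1 rfl
      · rcases hx1 with h | h
        · exact (hTnot _ hx2).1 (hGs _ h).1
        · exact (hTnot _ hx2).1 (hDsub _ (Finset.mem_erase.1 h).2).1
  -- master hypotheses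
  have H1 : ∀ x ∈ adds, x ∉ rems → x ∉ A := by
    intro x hx hnx
    rcases (hmadds x).1 hx with h | h | h
    · exact (hTnot _ h).1
    · exact (hEsub _ h).2
    · exact absurd ((hmrems x).2 (Or.inl h)) hnx
  have H2 : ∀ x ∈ rems, x ∉ adds → x ∈ A := by
    intro x hx hnx
    rcases (hmrems x).1 hx with h | h | h
    · exact absurd ((hmadds x).2 (Or.inr (Or.inr h))) hnx
    · exact (hDsub _ h).1
    · exact absurd ((hmadds x).2 (Or.inl h)) hnx
  have H3 : ∀ x ∈ adds, x ∈ rems →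
      (x ∉ A ∧ adds.idxOf x < rems.idxOf x) ∨
      (x ∈ A ∧ rems.idxOf x + 2 ≤ adds.idxOf x) := by
    intro x hx1 hx2
    have hTG : x ∈ T ∨ x ∈ Gs := by
      rcases (hmadds x).1 hx1 with h | h | h
      · exact Or.inl h
      · rcases (hmrems x).1 hx2 with h' | h' | h'
        · exact absurd (hGs _ h').1 (hEsub _ h).2
        · exact absurd (hDsub _ h').1 (hEsub _ h).2
        · exact absurd h (fun hc => (hTnot _ h').2 (hEsub _ hc).1)
      · exact Or.inr h
    rcases hTG with hT | hG
    · left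
      refine ⟨(hTnot _ hT).1, ?_⟩
      have hxPl : x ∈ Pl := (hmPl x).2 (Or.inr hT)
      have e1 : adds.idxOf x = Pl.idxOf x := by
        rw [hadds]; exact List.idxOf_append_of_mem hxPl
      have e2 : Pl.idxOf x < Pl.length := List.idxOf_lt_length_iff.2 hxPl
      have hxGF : x ∉ Gl ++ Fl := by
        rw [List.mem_append, hGl, hFl, Finset.mem_toList, Finset.mem_toList]
        rintro (h | h)
        · exact (hTnot _ hT).1 (hGs _ h).1
        · exact (hTnot _ hT).1 (hDsub _ (Finset.mem_erase.1 h).2).1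
      have e3 : rems.idxOf x = (Gl ++ Fl).length + Sl.idxOf x := by
        rw [hrems]; exact List.idxOf_append_of_notMem hxGF
      rw [e1, e3, List.length_append]
      omega
    · right
      refine ⟨(hGs _ hG).1, ?_⟩
      have hxGl : x ∈ Gl := by rw [hGl, Finset.mem_toList]; exact hG
      have hxPl : x ∉ Pl := by
        rw [hmPl]
        rintro (rfl | h)
        · exact h₁ (hGs _ hG).1
        · exact (hTnot _ h).1 (hGs _ hG).1
      have hxEl : x ∉ El := by
        rw [hEl, Finset.mem_toList, Finset.mem_erase]
        rintro ⟨_, h⟩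
        exact (hEsub _ h).2 (hGs _ hG).1
      have e1 : adds.idxOf x = Pl.length + (El.length + Gl.idxOf x) := by
        rw [hadds, List.idxOf_append_of_notMem hxPl,
          List.idxOf_append_of_notMem hxEl]
      have e2 : rems.idxOf x = Gl.idxOf x := by
        rw [hrems, List.idxOf_append_of_mem (by rw [List.mem_append]; exact Or.inl hxGl),
          List.idxOf_append_of_mem hxGl]
      rw [e1, e2]
      omega
  obtain ⟨hSV, hCH, hRUN⟩ := master adds rems A (haddslen.trans hremslen.symm)
    hndadds hndrems H1 H2 H3
  have hRUNB : (adds.zip rems).foldl stp A = B := by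
    rw [hRUN]
    ext x
    simp only [Finset.mem_union, Finset.mem_sdiff, List.mem_toFinset, hmadds, hmrems]
    constructor
    · rintro (⟨hxA, hnR⟩ | ⟨hAd, hnR⟩)
      · by_contra hxB
        exact hnR (Or.inr (Or.inl (by rw [hDdef, Finset.mem_sdiff]; exact ⟨hxA, hxB⟩)))
      · rcases hAd with h | h | h
        · exact absurd ⟨Or.inr (Or.inr h), (hTnot _ h).1⟩ hnR
        · exact (hEsub _ h).1
        · exact (hGs _ h).2
    · intro hxB
      by_cases hxG : x ∈ Gs
      · exact Or.inr ⟨Or.inr (Or.inr hxG), fun hc => hc.2 (hGs _ hxG).1⟩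
      · by_cases hxA : x ∈ A
        · refine Or.inl ⟨hxA, ?_⟩
          rintro (h | h | h)
          · exact hxG h
          · exact (hDsub _ h).2 hxB
          · exact (hTnot _ h).1 hxA
        · have hxE : x ∈ E := by rw [hEdef, Finset.mem_sdiff]; exact ⟨hxB, hxA⟩
          refine Or.inr ⟨Or.inr (Or.inl hxE), ?_⟩
          rintro ⟨h | h | h, _⟩
          · exact hxG h
          · exact hxA (hDsub _ h).1
          · exact (hTnot _ h).2 hxB
  -- assemble the walk
  set steps := adds.zip rems with hsteps
  have hsteplen : steps.length = n := by
    rw [hsteps, List.length_zip, haddslen, hremslen]; omega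
  obtain ⟨hLV, hLC, hLrun⟩ := svalid_labs steps A hSV hCH
  have hLlen : (labs steps).length = 2 * n := by rw [labs_length, hsteplen]
  have hLrunB : chainSets A (labs steps) = B := by rw [hLrun, hRUNB]
  obtain ⟨p, hplen, hpgv⟩ := exists_walk n (by omega) (labs steps) w₀ w₂ₙ hLV hLrunB
  have hplen2 : p.length = 2 * n := hplen.trans hLlen
  obtain ⟨adds', hac⟩ : ∃ t, adds = lab₁ :: t :=
    ⟨(T.erase lab₁).toList ++ (El ++ Gl), by rw [hadds, hPl, List.cons_append]⟩
  obtain ⟨r, rs, hrc⟩ : ∃ r rs, rems = r :: rs := by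
    cases h : rems with
    | nil => exfalso; rw [h] at hremslen; simp at hremslen; omega
    | cons r rs => exact ⟨r, rs, rfl⟩
  have hstep1 : steps = (lab₁, r) :: adds'.zip rs := by rw [hsteps, hac, hrc]; rfl
  have hlab1 : (labs steps).take 1 = [lab₁] := by rw [hstep1]; rfl
  have hgv1 : (p.getVert 1).1 = nxt A lab₁ := by
    rw [hpgv 1, hlab1]; rfl
  -- last label
  have hnlt : n - 1 < steps.length := by omega
  have hnlt1 : n - 1 < adds.length := by omega
  have hnlt2 : n - 1 < rems.length := by omega
  have hremlast : rems[n-1]'hnlt2 = lab₂ := by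
    have hre2 : rems = ((Gl ++ Fl) ++ (T.erase lab₂).toList) ++ [lab₂] := by
      rw [hrems, hSl, ← List.append_assoc]
    have hY : ((Gl ++ Fl) ++ (T.erase lab₂).toList).length = n - 1 := by
      have h9 : rems.length = ((Gl ++ Fl) ++ (T.erase lab₂).toList).length + 1 := by
        rw [hre2, List.length_append, List.length_singleton]
      omega
    have hgoal := List.getElem_concat_length (l := (Gl ++ Fl) ++ (T.erase lab₂).toList) (a := lab₂)
      (i := n-1) hY.symm (by rw [← hre2]; exact hnlt2)
    calc rems[n-1]'hnlt2 = (((Gl ++ Fl) ++ (T.erase lab₂).toList) ++ [lab₂])[n-1]'(by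
          rw [← hre2]; exact hnlt2) := by
          congr 1
      _ = lab₂ := hgoal
  have hsteplast : (steps[n-1]'hnlt).2 = lab₂ := by
    have hz : steps[n-1]'hnlt = (adds[n-1]'hnlt1, rems[n-1]'hnlt2) := List.getElem_zip
    rw [hz, hremlast]
  have hlablast : (labs steps)[2*(n-1)+1]'(by rw [labs_length]; omega) = lab₂ := by
    rw [labs_getElem_snd steps (n-1) hnlt, hsteplast]
  have hlast_not : lab₂ ∉ chainSets A ((labs steps).take (2*(n-1)+1)) := by
    have := LValid_getElem (labs steps) A hLV (2*(n-1)+1) (by rw [labs_length]; omega)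
    rwa [hlablast] at this
  refine ⟨p, hplen2, ?_, ⟨h₁, ?_⟩, ⟨?_, h₂⟩⟩
  · -- special walk
    intro i hi heq
    have hcongr := congrArg Subtype.val heq
    rw [hpgv i, hpgv (i+2)] at hcongr
    exact chainSets_ne (labs steps) A hLV hLC i (by omega) hcongr
  · -- first label
    rw [hgv1, mem_nxt]
    simp
  · -- last label
    have hidx : p.length - 1 = 2*(n-1)+1 := by omega
    rw [hidx, hpgv (2*(n-1)+1)]
    exact hlast_not
end

section
/- Let n ≥ 4 and let L ≥ 2n be an integer. Given two vertices u and v (not necessarily distinct) of the odd graph O_n, and elements λ_1 ∉ [u] and λ_2 ∉ [v], there exists a special walk of length exactly L from u to v in O_n whose first edge is labeled with λ_1 and whose last edge is labeled with λ_2. -/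
namespace SWL
variable {α : Type*} [DecidableEq α]
set_option linter.unusedSectionVars false

/-- One "swap": insert `p.1`, remove `p.2`. -/
def pstep (s : Finset α) (p : α × α) : Finset α := insert p.1 (s.erase p.2)

def prun (s : Finset α) (ps : List (α × α)) : Finset α := ps.foldl pstep s

@[simp] lemma prun_nil (s : Finset α) : prun s [] = s := rfl
@[simp] lemma prun_cons (s : Finset α) (p : α × α) (ps : List (α × α)) :
    prun s (p :: ps) = prun (pstep s p) ps := rfl
lemma prun_append (s : Finset α) (ps qs : List (α × α)) :
    prun s (ps ++ qs) = prun (prun s ps) qs := List.foldl_append ..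

/-- Feasibility of a swap sequence. -/
def PValid : Finset α → List (α × α) → Prop
  | _, [] => True
  | s, p :: t => p.1 ∉ s ∧ p.2 ∈ s ∧ PValid (pstep s p) t

@[simp] lemma pvalid_nil (s : Finset α) : PValid s [] := trivial
@[simp] lemma pvalid_cons (s : Finset α) (p : α × α) (t : List (α × α)) :
    PValid s (p :: t) ↔ p.1 ∉ s ∧ p.2 ∈ s ∧ PValid (pstep s p) t := Iff.rfl

lemma PValid.append {s : Finset α} {ps qs : List (α × α)}
    (h1 : PValid s ps) (h2 : PValid (prun s ps) qs) : PValid s (ps ++ qs) := by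
  induction ps generalizing s with
  | nil => simpa using h2
  | cons p t ih =>
    obtain ⟨h1a, h1b, h1c⟩ := h1
    exact ⟨h1a, h1b, ih h1c (by simpa using h2)⟩

/-- No-backtracking chain condition between consecutive swaps. -/
def PChain (ps : List (α × α)) : Prop := List.IsChain (fun p q => q.1 ≠ p.2) ps

lemma pstep_card {s : Finset α} {p : α × α} (h1 : p.1 ∉ s) (h2 : p.2 ∈ s) :
    (pstep s p).card = s.card := by
  unfold pstep
  rw [Finset.card_insert_of_notMem (fun hc => h1 (Finset.mem_of_mem_erase hc)),
    Finset.card_erase_of_mem h2]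
  have : 1 ≤ s.card := Finset.card_pos.2 ⟨p.2, h2⟩
  omega

lemma prun_card {s : Finset α} {ps : List (α × α)} (h : PValid s ps) :
    (prun s ps).card = s.card := by
  induction ps generalizing s with
  | nil => rfl
  | cons p t ih =>
    obtain ⟨h1, h2, h3⟩ := h
    rw [prun_cons, ih h3, pstep_card h1 h2]

/-- A "stretched swap": remove `o`, insert `b`, taking a detour through `zs`. -/
def STR (o : α) : List α → α → List (α × α)
  | [], b => [(b, o)]
  | z :: zs, b => (z, o) :: STR z zs b

@[simp] lemma STR_length (o b : α) (zs : List α) : (STR o zs b).length = zs.length + 1 := by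
  induction zs generalizing o with
  | nil => rfl
  | cons z t ih => simp [STR, ih]

lemma STR_head (o b : α) (zs : List α) : (STR o zs b).head? = some (zs.headD b, o) := by
  cases zs <;> rfl

lemma STR_getLast (o b : α) (zs : List α) :
    (STR o zs b).getLast? = some (b, zs.getLastD o) := by
  induction zs generalizing o with
  | nil => rfl
  | cons z t ih =>
    cases t with
    | nil => rfl
    | cons w t' =>
      have : STR o (z :: w :: t') b = (z, o) :: (w, z) :: STR w t' b := rfl
      rw [this, List.getLast?_cons_cons]
      have h2 : ((w, z) :: STR w t' b) = STR z (w :: t') b := rfl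
      rw [h2, ih z]
      simp only [List.getLastD_cons]

@[simp] lemma pstep_def (s : Finset α) (p : α × α) :
    pstep s p = insert p.1 (s.erase p.2) := rfl

lemma STR_spec {s : Finset α} {o b : α} {zs : List α}
    (ho : o ∈ s) (hb : b ∉ s) (hbzs : b ∉ zs) (hnd : zs.Nodup)
    (hzs : ∀ z ∈ zs, z ∉ s) :
    PValid s (STR o zs b) ∧ prun s (STR o zs b) = insert b (s.erase o) ∧
      PChain (STR o zs b) := by
  induction zs generalizing o s with
  | nil =>
    exact ⟨⟨hb, ho, trivial⟩, rfl, List.isChain_singleton _⟩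
  | cons z t ih =>
    have hz : z ∉ s := hzs z (by simp)
    have hco : STR o (z :: t) b = (z, o) :: STR z t b := rfl
    set s' : Finset α := insert z (s.erase o) with hs'
    have hzo : z ∈ s' := by simp [hs']
    have hbs' : b ∉ s' := by
      simp only [hs', Finset.mem_insert, not_or]
      exact ⟨fun h => hbzs (by simp [h]), fun h => hb (Finset.mem_of_mem_erase h)⟩
    have hbt : b ∉ t := fun h => hbzs (by simp [h])
    have hts' : ∀ w ∈ t, w ∉ s' := by
      intro w hw
      simp only [hs', Finset.mem_insert, not_or]
      exact ⟨fun h => (List.nodup_cons.1 hnd).1 (h ▸ hw),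
        fun h => hzs w (by simp [hw]) (Finset.mem_of_mem_erase h)⟩
    obtain ⟨ihv, ihr, ihc⟩ := ih hzo hbs' hbt hnd.of_cons hts'
    have hps : pstep s (z, o) = s' := rfl
    refine ⟨⟨hz, ho, by rw [hps]; exact ihv⟩, ?_, ?_⟩
    · have : prun s (STR o (z :: t) b) = prun s' (STR z t b) := by
        rw [hco, prun_cons, hps]
      rw [this, ihr, hs', Finset.erase_insert_eq_erase,
        Finset.erase_eq_of_notMem (fun h => hz (Finset.mem_of_mem_erase h))]
    · rw [PChain, hco, List.isChain_cons]
      refine ⟨?_, ihc⟩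
      intro q hq
      rw [STR_head] at hq
      cases hq
      show t.headD b ≠ o
      rcases t with _ | ⟨w, t'⟩
      · exact fun h => hb (by simp only [List.headD_nil] at h; rw [h]; exact ho)
      · exact fun h => hzs w (by simp) (by simp only [List.headD_cons] at h; rw [h]; exact ho)

lemma head?_mem_fst {l : List (α × α)} {pr : α × α} (h : l.head? = some pr) : pr ∈ l :=
  List.mem_of_mem_head? (by rw [h]; rfl)

lemma getLast?_mem {l : List (α × α)} {pr : α × α} (h : l.getLast? = some pr) : pr ∈ l :=
  List.mem_of_mem_getLast? (by rw [h]; rfl)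

lemma TRAIN_spec {s : Finset α} {ys xs : List α}
    (hlen : ys.length = xs.length) (hynd : ys.Nodup) (hxnd : xs.Nodup)
    (hxs : ∀ x ∈ xs, x ∈ s) (hys : ∀ y ∈ ys, y ∉ s)
    (hd : ∀ y ∈ ys, ∀ x ∈ xs, y ≠ x) :
    PValid s (ys.zip xs) ∧
      prun s (ys.zip xs) = (s \ xs.toFinset) ∪ ys.toFinset ∧ PChain (ys.zip xs) := by
  induction ys generalizing xs s with
  | nil =>
    have hx : xs = [] := List.length_eq_zero_iff.1 hlen.symm
    subst hx
    simp [PChain, prun]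
  | cons y ys' ih =>
    rcases xs with _ | ⟨x, xs'⟩
    · simp at hlen
    have hxin : x ∈ s := hxs x (by simp)
    have hyout : y ∉ s := hys y (by simp)
    set s' : Finset α := insert y (s.erase x) with hs'
    have hps : pstep s (y, x) = s' := rfl
    have hcons : (y :: ys').zip (x :: xs') = (y, x) :: ys'.zip xs' := rfl
    have hx' : ∀ w ∈ xs', w ∈ s' := by
      intro w hw
      simp only [hs', Finset.mem_insert, Finset.mem_erase]
      right
      exact ⟨fun h => (List.nodup_cons.1 hxnd).1 (h ▸ hw), hxs w (by simp [hw])⟩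
    have hy' : ∀ w ∈ ys', w ∉ s' := by
      intro w hw
      simp only [hs', Finset.mem_insert, Finset.mem_erase, not_or, not_and]
      exact ⟨fun h => (List.nodup_cons.1 hynd).1 (h ▸ hw),
        fun _ => hys w (by simp [hw])⟩
    obtain ⟨ihv, ihr, ihc⟩ := ih (s := s') (by simpa using hlen) hynd.of_cons hxnd.of_cons
      hx' hy' (fun a ha c hc => hd a (by simp [ha]) c (by simp [hc]))
    refine ⟨⟨hyout, hxin, by rw [hps]; exact ihv⟩, ?_, ?_⟩
    · rw [hcons, prun_cons, hps, ihr]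
      have hyxs' : y ∉ xs'.toFinset := by
        simp only [List.mem_toFinset]
        exact fun h => hd y (by simp) y (by simp [h]) rfl
      ext a
      simp only [Finset.mem_union, Finset.mem_sdiff, hs', Finset.mem_insert,
        Finset.mem_erase, List.toFinset_cons, List.mem_toFinset] at *
      constructor
      · rintro (⟨(rfl | ⟨hax, has⟩), hnxs⟩ | ha)
        · tauto
        · tauto
        · tauto
      · rintro (⟨has, hnx⟩ | (rfl | ha))
        · have : a ≠ x := fun h => hnx (Or.inl h)
          have : a ∉ xs' := fun h => hnx (Or.inr (List.mem_toFinset.1 (by simpa using h)))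
          tauto
        · tauto
        · tauto
    · rw [PChain, hcons, List.isChain_cons]
      refine ⟨?_, ihc⟩
      intro q hq
      have hmem := List.of_mem_zip (head?_mem_fst hq)
      exact hd q.1 (by simp [hmem.1]) x (by simp)

lemma core {n : ℕ} (hn : 4 ≤ n) {A B : Finset (Fin (2*n-1))}
    (hA : A.card = n-1) (hB : B.card = n-1) (hne : A ≠ B) (hint : (A ∩ B).Nonempty)
    (p q : Fin (2*n-1)) :
    ∃ ws : List (Fin (2*n-1) × Fin (2*n-1)), PValid A ws ∧ prun A ws = B ∧ PChain ws ∧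
      ws.length = n-2 ∧ (∀ pr ∈ ws.head?, pr.1 ≠ p) ∧ (∀ pr ∈ ws.getLast?, pr.2 ≠ q) := by
  classical
  have hcard : Fintype.card (Fin (2*n-1)) = 2*n-1 := Fintype.card_fin _
  -- basic cardinalities
  have hAB : (A \ B).card + (A ∩ B).card = n - 1 := by
    rw [Finset.card_sdiff_add_card_inter, hA]
  have hBA : (B \ A).card + (A ∩ B).card = n - 1 := by
    rw [Finset.inter_comm, Finset.card_sdiff_add_card_inter, hB]
  set dB := (A \ B).card with hdB
  have hABne : (A \ B).Nonempty := by
    rw [Finset.sdiff_nonempty]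
    intro hsub
    exact hne (Finset.eq_of_subset_of_card_le hsub (by rw [hA, hB]))
  have hdB1 : 1 ≤ dB := Finset.card_pos.2 hABne
  have hintc : 1 ≤ (A ∩ B).card := Finset.card_pos.2 hint
  have hdB2 : dB ≤ n - 2 := by omega
  have hBAcard : (B \ A).card = dB := by omega
  set sl := n - 2 - dB with hsl
  -- the reservoir of outside elements
  have hunion : (A ∪ B).card = n - 1 + dB := by
    have := Finset.card_union_add_card_inter A B
    omega
  have hZcard : ((A ∪ B)ᶜ : Finset (Fin (2*n-1))).card = n - dB := by
    rw [Finset.card_compl, hcard, hunion]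
    omega
  have hZ'card : sl ≤ (((A ∪ B)ᶜ \ {p, q}) : Finset (Fin (2*n-1))).card := by
    have h1 : (({p, q} : Finset (Fin (2*n-1)))).card ≤ 2 := Finset.card_insert_le _ _ |>.trans (by simp)
    have h2 := Finset.le_card_sdiff ({p,q} : Finset (Fin (2*n-1))) ((A ∪ B)ᶜ)
    have h3 : ((A ∪ B)ᶜ \ ({p,q} : Finset (Fin (2*n-1)))).card ≥ (n - dB) - 2 := by
      have := Finset.card_sdiff_add_card_inter ((A ∪ B)ᶜ) ({p,q} : Finset (Fin (2*n-1)))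
      have h4 : (((A ∪ B)ᶜ) ∩ {p,q}).card ≤ 2 := le_trans (Finset.card_le_card Finset.inter_subset_right) h1
      omega
    omega
  obtain ⟨zsF, hzssub, hzscard⟩ := Finset.exists_subset_card_eq hZ'card
  set zs := zsF.toList with hzs
  have hzsnd : zs.Nodup := zsF.nodup_toList
  have hzslen : zs.length = sl := by rw [hzs, Finset.length_toList, hzscard]
  have hzsZ : ∀ z ∈ zs, z ∈ (A ∪ B)ᶜ \ {p, q} := fun z hz => hzssub (by rwa [hzs, Finset.mem_toList] at hz)
  have hzsnA : ∀ z ∈ zs, z ∉ A := by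
    intro z hz
    have := hzsZ z hz
    simp only [Finset.mem_sdiff, Finset.mem_compl, Finset.mem_union] at this
    tauto
  have hzsnB : ∀ z ∈ zs, z ∉ B := by
    intro z hz
    have := hzsZ z hz
    simp only [Finset.mem_sdiff, Finset.mem_compl, Finset.mem_union] at this
    tauto
  have hzsnp : ∀ z ∈ zs, z ≠ p := by
    intro z hz
    have := hzsZ z hz
    simp only [Finset.mem_sdiff, Finset.mem_insert, Finset.mem_singleton] at this
    tauto
  have hzsnq : ∀ z ∈ zs, z ≠ q := by
    intro z hz
    have := hzsZ z hz
    simp only [Finset.mem_sdiff, Finset.mem_insert, Finset.mem_singleton] at this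
    tauto
  -- choice of x₁
  have hx1 : ∃ x₁ ∈ A \ B, q ∉ (A \ B).erase x₁ := by
    by_cases hq : q ∈ A \ B
    · exact ⟨q, hq, Finset.notMem_erase _ _⟩
    · obtain ⟨x₁, hx₁⟩ := hABne
      exact ⟨x₁, hx₁, fun hc => hq (Finset.mem_of_mem_erase hc)⟩
  obtain ⟨x₁, hx₁AB, hqx⟩ := hx1
  -- choice of y₁
  have hy1 : ∃ y₁ ∈ B \ A, (sl = 0 → y₁ ≠ p) := by
    by_cases hs : sl = 0
    · have hdBge : 2 ≤ dB := by omega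
      have : 1 ≤ ((B \ A).erase p).card := by
        have := Finset.pred_card_le_card_erase (s := B \ A) (a := p)
        omega
      obtain ⟨y₁, hy₁⟩ := Finset.card_pos.1 this
      exact ⟨y₁, Finset.mem_of_mem_erase hy₁, fun _ => Finset.ne_of_mem_erase hy₁⟩
    · obtain ⟨y₁, hy₁⟩ := Finset.card_pos.1 (show 1 ≤ (B \ A).card by omega)
      exact ⟨y₁, hy₁, fun h => absurd h hs⟩
  obtain ⟨y₁, hy₁BA, hy₁p⟩ := hy1
  set xs' := ((A \ B).erase x₁).toList with hxs'
  set ys' := ((B \ A).erase y₁).toList with hys'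
  have hxs'len : xs'.length = dB - 1 := by
    rw [hxs', Finset.length_toList, Finset.card_erase_of_mem hx₁AB]
  have hys'len : ys'.length = dB - 1 := by
    rw [hys', Finset.length_toList, Finset.card_erase_of_mem hy₁BA, hBAcard]
  have hxs'mem : ∀ x ∈ xs', x ∈ (A \ B).erase x₁ := fun x hx => by rwa [hxs', Finset.mem_toList] at hx
  have hys'mem : ∀ y ∈ ys', y ∈ (B \ A).erase y₁ := fun y hy => by rwa [hys', Finset.mem_toList] at hy
  -- facts about x₁, y₁
  have hx₁A : x₁ ∈ A := (Finset.mem_sdiff.1 hx₁AB).1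
  have hx₁B : x₁ ∉ B := (Finset.mem_sdiff.1 hx₁AB).2
  have hy₁B : y₁ ∈ B := (Finset.mem_sdiff.1 hy₁BA).1
  have hy₁A : y₁ ∉ A := (Finset.mem_sdiff.1 hy₁BA).2
  -- STR part
  have hy₁zs : y₁ ∉ zs := fun h => hzsnB y₁ h hy₁B
  obtain ⟨strV, strR, strC⟩ := STR_spec (s := A) (o := x₁) (b := y₁) (zs := zs)
    hx₁A hy₁A hy₁zs hzsnd hzsnA
  set A₂ : Finset (Fin (2*n-1)) := insert y₁ (A.erase x₁) with hA₂
  -- TRAIN part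
  have htrainX : ∀ x ∈ xs', x ∈ A₂ := by
    intro x hx
    have h := Finset.mem_sdiff.1 (Finset.mem_of_mem_erase (hxs'mem x hx))
    simp only [hA₂, Finset.mem_insert, Finset.mem_erase]
    exact Or.inr ⟨Finset.ne_of_mem_erase (hxs'mem x hx), h.1⟩
  have htrainY : ∀ y ∈ ys', y ∉ A₂ := by
    intro y hy
    have h := Finset.mem_sdiff.1 (Finset.mem_of_mem_erase (hys'mem y hy))
    simp only [hA₂, Finset.mem_insert, Finset.mem_erase, not_or, not_and]
    exact ⟨Finset.ne_of_mem_erase (hys'mem y hy), fun _ => h.2⟩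
  have htrainD : ∀ y ∈ ys', ∀ x ∈ xs', y ≠ x := by
    intro y hy x hx heq
    have h1 := Finset.mem_sdiff.1 (Finset.mem_of_mem_erase (hys'mem y hy))
    have h2 := Finset.mem_sdiff.1 (Finset.mem_of_mem_erase (hxs'mem x hx))
    exact h1.2 (heq ▸ h2.1)
  obtain ⟨trV, trR, trC⟩ := TRAIN_spec (s := A₂) (ys := ys') (xs := xs')
    (by rw [hxs'len, hys'len]) (Finset.nodup_toList _) (Finset.nodup_toList _)
    htrainX htrainY htrainD
  refine ⟨STR x₁ zs y₁ ++ ys'.zip xs', ?_, ?_, ?_, ?_, ?_, ?_⟩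
  · exact strV.append (by rwa [strR])
  · rw [prun_append, strR, trR]
    have hxs'F : xs'.toFinset = (A \ B).erase x₁ := by rw [hxs', Finset.toList_toFinset]
    have hys'F : ys'.toFinset = (B \ A).erase y₁ := by rw [hys', Finset.toList_toFinset]
    rw [hxs'F, hys'F]
    ext a
    simp only [hA₂, Finset.mem_union, Finset.mem_sdiff, Finset.mem_insert, Finset.mem_erase]
    constructor
    · rintro (⟨(rfl | ⟨hax, haA⟩), hnxs⟩ | ⟨hay, haB, haA⟩)
      · exact hy₁B
      · by_contra haB
        exact hnxs ⟨hax, haA, haB⟩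
      · exact haB
    · intro haB
      by_cases haA : a ∈ A
      · refine Or.inl ⟨Or.inr ⟨fun h => hx₁B (h ▸ haB), haA⟩, ?_⟩
        rintro ⟨-, -, hnB⟩
        exact hnB haB
      · by_cases hay : a = y₁
        · refine Or.inl ⟨Or.inl hay, ?_⟩
          rintro ⟨-, hA', -⟩
          exact haA hA'
        · exact Or.inr ⟨hay, haB, haA⟩
  · rw [PChain, List.isChain_append]
    refine ⟨strC, trC, ?_⟩
    intro pr hpr qr hqr
    rw [STR_getLast] at hpr
    cases hpr
    have hq1 := List.of_mem_zip (head?_mem_fst hqr)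
    have hq1B := Finset.mem_sdiff.1 (Finset.mem_of_mem_erase (hys'mem _ hq1.1))
    show qr.1 ≠ zs.getLastD x₁
    rcases hlast : zs.getLast? with _ | z
    · have hze : zs = [] := List.getLast?_eq_none_iff.1 hlast
      rw [hze]
      exact fun h => hq1B.2 (h ▸ hx₁A)
    · have hzl : zs.getLastD x₁ = z := by
        rw [List.getLastD_eq_getLast?, hlast]; rfl
      rw [hzl]
      exact fun h => hzsnB z (List.mem_of_mem_getLast? (by rw [hlast]; rfl)) (h ▸ hq1B.1)
  · rw [List.length_append, STR_length, List.length_zip, hxs'len, hys'len, hzslen]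
    omega
  · intro pr hpr
    rw [List.head?_append_of_ne_nil] at hpr
    · rw [STR_head] at hpr
      cases hpr
      show zs.headD y₁ ≠ p
      rcases zs with _ | ⟨z, t⟩
      · have hsl0 : sl = 0 := by simpa using hzslen.symm
        simpa using hy₁p hsl0
      · simpa using hzsnp z (by simp)
    · cases zs <;> simp [STR]
  · intro pr hpr
    rcases hys'e : ys'.zip xs' with _ | ⟨pr0, rest⟩
    · rw [hys'e, List.append_nil, STR_getLast] at hpr
      cases hpr
      show zs.getLastD x₁ ≠ q
      have hdBeq : dB = 1 := by
        have h0 : (ys'.zip xs').length = 0 := by rw [hys'e]; rfl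
        rw [List.length_zip, hxs'len, hys'len] at h0
        omega
      have hsl1 : 1 ≤ sl := by omega
      rcases hlast : zs.getLast? with _ | z
      · exfalso
        have hze : zs = [] := List.getLast?_eq_none_iff.1 hlast
        rw [hze] at hzslen
        simp at hzslen
        omega
      · have hzl : zs.getLastD x₁ = z := by
          rw [List.getLastD_eq_getLast?, hlast]; rfl
        rw [hzl]
        exact hzsnq z (List.mem_of_mem_getLast? (by rw [hlast]; rfl))
    · rw [List.getLast?_append_of_ne_nil _ (by rw [hys'e]; simp)] at hpr
      have hq2 := List.of_mem_zip (getLast?_mem hpr)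
      exact fun h => hqx (h ▸ hxs'mem _ hq2.2)

lemma glue {n : ℕ} (hn : 4 ≤ n) {S T : Finset (Fin (2*n-1))}
    (hS : S.card = n-1) (hT : T.card = n-1) {l₁ l₂ : Fin (2*n-1)}
    (h1 : l₁ ∉ S) (h2 : l₂ ∉ T) {o₁ bf : Fin (2*n-1)} (ho : o₁ ∈ S) (hb : bf ∈ T)
    (hne : insert l₁ (S.erase o₁) ≠ insert l₂ (T.erase bf))
    (hcomm : ((insert l₁ (S.erase o₁)) ∩ (insert l₂ (T.erase bf))).Nonempty) :
    ∃ ps : List (Fin (2*n-1) × Fin (2*n-1)), PValid S ps ∧ prun S ps = T ∧ PChain ps ∧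
      ps.length = n ∧ (∀ pr ∈ ps.head?, pr.1 = l₁) ∧ (∀ pr ∈ ps.getLast?, pr.2 = l₂) := by
  classical
  set S₁ : Finset (Fin (2*n-1)) := insert l₁ (S.erase o₁) with hS₁
  set T₁ : Finset (Fin (2*n-1)) := insert l₂ (T.erase bf) with hT₁
  have hScard : S₁.card = n - 1 := by
    rw [hS₁, Finset.card_insert_of_notMem (fun hc => h1 (Finset.mem_of_mem_erase hc)),
      Finset.card_erase_of_mem ho, hS]
    have : 1 ≤ S.card := Finset.card_pos.2 ⟨o₁, ho⟩
    omega
  have hTcard : T₁.card = n - 1 := by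
    rw [hT₁, Finset.card_insert_of_notMem (fun hc => h2 (Finset.mem_of_mem_erase hc)),
      Finset.card_erase_of_mem hb, hT]
    have : 1 ≤ T.card := Finset.card_pos.2 ⟨bf, hb⟩
    omega
  obtain ⟨ws, wsV, wsR, wsC, wsL, wsH, wsE⟩ := core hn hScard hTcard hne hcomm o₁ bf
  have hwsne : ws ≠ [] := by
    intro h
    rw [h] at wsL
    simp at wsL
    omega
  have hbfT₁ : bf ∉ T₁ := by
    simp only [hT₁, Finset.mem_insert, not_or]
    exact ⟨fun h => h2 (h ▸ hb), Finset.notMem_erase _ _⟩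
  have hl₂T₁ : l₂ ∈ T₁ := by simp [hT₁]
  have hstepT : pstep T₁ (bf, l₂) = T := by
    simp only [pstep_def, hT₁]
    rw [Finset.erase_insert_eq_erase, Finset.erase_eq_of_notMem
      (fun hc => h2 (Finset.mem_of_mem_erase hc)), Finset.insert_erase hb]
  refine ⟨(l₁, o₁) :: (ws ++ [(bf, l₂)]), ?_, ?_, ?_, ?_, ?_, ?_⟩
  · refine ⟨h1, ho, ?_⟩
    have hps : pstep S (l₁, o₁) = S₁ := rfl
    rw [hps]
    exact wsV.append (by rw [wsR]; exact ⟨hbfT₁, hl₂T₁, trivial⟩)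
  · have hps : pstep S (l₁, o₁) = S₁ := rfl
    rw [prun_cons, hps, prun_append, wsR]
    simpa using hstepT
  · rw [PChain, List.isChain_cons]
    constructor
    · intro qr hqr
      rw [List.head?_append_of_ne_nil _ hwsne] at hqr
      exact wsH qr hqr
    · rw [List.isChain_append]
      refine ⟨wsC, List.isChain_singleton _, ?_⟩
      intro x hx y hy
      simp only [List.head?_cons, Option.mem_some_iff] at hy
      subst hy
      exact Ne.symm (wsE x hx)
  · simp only [List.length_cons, List.length_append, wsL, List.length_cons, List.length_nil]
    omega
  · intro pr hpr
    simp only [List.head?_cons, Option.mem_some_iff] at hpr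
    subst hpr
    rfl
  · intro pr hpr
    have : ((l₁, o₁) :: (ws ++ [(bf, l₂)])).getLast? = some (bf, l₂) := by
      rw [show (l₁, o₁) :: (ws ++ [(bf, l₂)]) = ((l₁, o₁) :: ws) ++ [(bf, l₂)] by simp,
        List.getLast?_concat]
    rw [this] at hpr
    simp only [Option.mem_some_iff] at hpr
    subst hpr
    rfl

lemma pick1 {β : Type*} [DecidableEq β] {s : Finset β} (h : 2 ≤ s.card) (a : β) :
    ∃ c ∈ s, c ≠ a := Finset.exists_mem_ne (by omega) a

lemma pick2 {β : Type*} [DecidableEq β] {s : Finset β} (h : 3 ≤ s.card) (a b : β) :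
    ∃ c ∈ s, c ≠ a ∧ c ≠ b := by
  have h1 : ({a, b} : Finset β).card ≤ 2 := (Finset.card_insert_le _ _).trans (by simp)
  have h2 : 1 ≤ (s \ {a, b}).card := by
    have := Finset.le_card_sdiff ({a, b} : Finset β) s
    omega
  obtain ⟨c, hc⟩ := Finset.card_pos.1 h2
  rw [Finset.mem_sdiff, Finset.mem_insert, Finset.mem_singleton] at hc
  exact ⟨c, hc.1, fun h => hc.2 (Or.inl h), fun h => hc.2 (Or.inr h)⟩

lemma mem_ins_erase {β : Type*} [DecidableEq β] {s : Finset β} {l o a : β} :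
    a ∈ insert l (s.erase o) ↔ a = l ∨ (a ≠ o ∧ a ∈ s) := by
  simp [Finset.mem_insert, Finset.mem_erase]

lemma base_pairs {n : ℕ} (hn : 4 ≤ n) {S T : Finset (Fin (2*n-1))}
    (hS : S.card = n-1) (hT : T.card = n-1) {l₁ l₂ : Fin (2*n-1)}
    (h1 : l₁ ∉ S) (h2 : l₂ ∉ T) :
    ∃ ps : List (Fin (2*n-1) × Fin (2*n-1)), PValid S ps ∧ prun S ps = T ∧ PChain ps ∧
      ps.length = n ∧ (∀ pr ∈ ps.head?, pr.1 = l₁) ∧ (∀ pr ∈ ps.getLast?, pr.2 = l₂) := by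
  classical
  have hS3 : 3 ≤ S.card := by omega
  have hT3 : 3 ≤ T.card := by omega
  -- helper to conclude using chosen o₁, bf and witnesses
  have main : ∀ o₁ ∈ S, ∀ bf ∈ T,
      ∀ wd, ((wd ∈ insert l₁ (S.erase o₁) ∧ wd ∉ insert l₂ (T.erase bf)) ∨
             (wd ∈ insert l₂ (T.erase bf) ∧ wd ∉ insert l₁ (S.erase o₁))) →
      ∀ wc, wc ∈ insert l₁ (S.erase o₁) → wc ∈ insert l₂ (T.erase bf) →
      ∃ ps : List (Fin (2*n-1) × Fin (2*n-1)), PValid S ps ∧ prun S ps = T ∧ PChain ps ∧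
        ps.length = n ∧ (∀ pr ∈ ps.head?, pr.1 = l₁) ∧ (∀ pr ∈ ps.getLast?, pr.2 = l₂) := by
    intro o₁ ho bf hb wd hwd wc hwc1 hwc2
    refine glue hn hS hT h1 h2 ho hb ?_ ⟨wc, Finset.mem_inter.2 ⟨hwc1, hwc2⟩⟩
    rcases hwd with ⟨hin, hout⟩ | ⟨hin, hout⟩
    · exact fun h => hout (h ▸ hin)
    · exact fun h => hout (h.symm ▸ hin)
  by_cases hST : S = T
  · -- S = T
    subst hST
    obtain ⟨s₁, hs₁⟩ := Finset.card_pos.1 (by omega : 1 ≤ S.card)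
    obtain ⟨s₂, hs₂, hs₂₁⟩ := pick1 (s := S) (by omega) s₁
    obtain ⟨s₃, hs₃, hs₃₁, hs₃₂⟩ := pick2 hS3 s₁ s₂
    refine main s₁ hs₁ s₂ hs₂ s₂ (Or.inl ⟨?_, ?_⟩) s₃ ?_ ?_
    · exact mem_ins_erase.2 (Or.inr ⟨hs₂₁, hs₂⟩)
    · rw [mem_ins_erase]
      rintro (h | ⟨hne, _⟩)
      · exact h2 (h ▸ hs₂)
      · exact hne rfl
    · exact mem_ins_erase.2 (Or.inr ⟨hs₃₁, hs₃⟩)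
    · exact mem_ins_erase.2 (Or.inr ⟨hs₃₂, hs₃⟩)
  · -- S ≠ T
    have hSTne : (S \ T).Nonempty := by
      rw [Finset.sdiff_nonempty]
      intro hsub
      exact hST (Finset.eq_of_subset_of_card_le hsub (by omega))
    have hTSne : (T \ S).Nonempty := by
      rw [Finset.sdiff_nonempty]
      intro hsub
      exact hST (Finset.eq_of_subset_of_card_le hsub (by omega)).symm
    obtain ⟨x₀, hx₀⟩ := hSTne
    obtain ⟨y₀, hy₀⟩ := hTSne
    have hx₀S : x₀ ∈ S := (Finset.mem_sdiff.1 hx₀).1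
    have hx₀T : x₀ ∉ T := (Finset.mem_sdiff.1 hx₀).2
    have hy₀T : y₀ ∈ T := (Finset.mem_sdiff.1 hy₀).1
    have hy₀S : y₀ ∉ S := (Finset.mem_sdiff.1 hy₀).2
    by_cases hll : l₁ = l₂
    · -- l₁ = l₂
      subst hll
      by_cases hK : (S ∩ T).Nonempty
      · obtain ⟨k, hk⟩ := hK
        have hkS : k ∈ S := (Finset.mem_inter.1 hk).1
        have hkT : k ∈ T := (Finset.mem_inter.1 hk).2
        refine main k hkS y₀ hy₀T x₀ (Or.inl ⟨?_, ?_⟩) l₁ ?_ ?_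
        · exact mem_ins_erase.2 (Or.inr ⟨fun h => hx₀T (h ▸ hkT), hx₀S⟩)
        · rw [mem_ins_erase]
          rintro (h | ⟨-, hmem⟩)
          · exact h1 (h ▸ hx₀S)
          · exact hx₀T hmem
        · exact mem_ins_erase.2 (Or.inl rfl)
        · exact mem_ins_erase.2 (Or.inl rfl)
      · -- S ∩ T = ∅
        obtain ⟨y', hy', hy'y₀⟩ := pick1 (s := T) (by omega) y₀
        have hy'S : y' ∉ S := fun h => hK ⟨y', Finset.mem_inter.2 ⟨h, hy'⟩⟩
        refine main x₀ hx₀S y₀ hy₀T y' (Or.inr ⟨?_, ?_⟩) l₁ ?_ ?_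
        · exact mem_ins_erase.2 (Or.inr ⟨hy'y₀, hy'⟩)
        · rw [mem_ins_erase]
          rintro (h | ⟨-, hmem⟩)
          · exact h2 (h ▸ hy')
          · exact hy'S hmem
        · exact mem_ins_erase.2 (Or.inl rfl)
        · exact mem_ins_erase.2 (Or.inl rfl)
    · -- l₁ ≠ l₂
      by_cases hl₁T : l₁ ∈ T
      · by_cases hl₂S : l₂ ∈ S
        · -- C1 : l₁ ∈ T, l₂ ∈ S
          by_cases hK : (S ∩ T).Nonempty
          · obtain ⟨k, hk⟩ := hK
            have hkS : k ∈ S := (Finset.mem_inter.1 hk).1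
            have hkT : k ∈ T := (Finset.mem_inter.1 hk).2
            obtain ⟨o₁, ho₁, ho₁l₂, ho₁k⟩ := pick2 (s := S) hS3 l₂ k
            refine main o₁ ho₁ k hkT k (Or.inl ⟨?_, ?_⟩) l₂ ?_ ?_
            · exact mem_ins_erase.2 (Or.inr ⟨fun h => ho₁k h.symm, hkS⟩)
            · rw [mem_ins_erase]
              rintro (h | ⟨hne, -⟩)
              · exact h2 (h ▸ hkT)
              · exact hne rfl
            · exact mem_ins_erase.2 (Or.inr ⟨fun h => ho₁l₂ h.symm, hl₂S⟩)
            · exact mem_ins_erase.2 (Or.inl rfl)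
          · -- S ∩ T = ∅
            obtain ⟨o₁, ho₁, ho₁l₂⟩ := pick1 (s := S) (by omega) l₂
            obtain ⟨y, hy, hyl₁⟩ := pick1 (s := T) (by omega) l₁
            obtain ⟨x', hx', hx'o₁, hx'l₂⟩ := pick2 (s := S) hS3 o₁ l₂
            have hx'T : x' ∉ T := fun h => hK ⟨x', Finset.mem_inter.2 ⟨hx', h⟩⟩
            refine main o₁ ho₁ y hy x' (Or.inl ⟨?_, ?_⟩) l₂ ?_ ?_
            · exact mem_ins_erase.2 (Or.inr ⟨hx'o₁, hx'⟩)
            · rw [mem_ins_erase]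
              rintro (h | ⟨-, hmem⟩)
              · exact hx'l₂ h
              · exact hx'T hmem
            · exact mem_ins_erase.2 (Or.inr ⟨fun h => ho₁l₂ h.symm, hl₂S⟩)
            · exact mem_ins_erase.2 (Or.inl rfl)
        · -- C2 : l₁ ∈ T, l₂ ∉ S
          obtain ⟨y, hy, hyl₁⟩ := pick1 (s := T) (by omega) l₁
          by_cases hK : (S ∩ T).Nonempty
          · obtain ⟨k, hk⟩ := hK
            have hkS : k ∈ S := (Finset.mem_inter.1 hk).1
            have hkT : k ∈ T := (Finset.mem_inter.1 hk).2
            refine main k hkS y hy x₀ (Or.inl ⟨?_, ?_⟩) l₁ ?_ ?_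
            · exact mem_ins_erase.2 (Or.inr ⟨fun h => hx₀T (h ▸ hkT), hx₀S⟩)
            · rw [mem_ins_erase]
              rintro (h | ⟨-, hmem⟩)
              · exact hl₂S (h ▸ hx₀S)
              · exact hx₀T hmem
            · exact mem_ins_erase.2 (Or.inl rfl)
            · exact mem_ins_erase.2 (Or.inr ⟨Ne.symm hyl₁, hl₁T⟩)
          · obtain ⟨o₁, ho₁, ho₁x₀⟩ := pick1 (s := S) (by omega) x₀
            refine main o₁ ho₁ y hy x₀ (Or.inl ⟨?_, ?_⟩) l₁ ?_ ?_
            · exact mem_ins_erase.2 (Or.inr ⟨fun h => ho₁x₀ h.symm, hx₀S⟩)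
            · rw [mem_ins_erase]
              rintro (h | ⟨-, hmem⟩)
              · exact hl₂S (h ▸ hx₀S)
              · exact hx₀T hmem
            · exact mem_ins_erase.2 (Or.inl rfl)
            · exact mem_ins_erase.2 (Or.inr ⟨Ne.symm hyl₁, hl₁T⟩)
      · by_cases hl₂S : l₂ ∈ S
        · -- C3 : l₁ ∉ T, l₂ ∈ S
          by_cases hK : (S ∩ T).Nonempty
          · obtain ⟨k, hk⟩ := hK
            have hkS : k ∈ S := (Finset.mem_inter.1 hk).1
            have hkT : k ∈ T := (Finset.mem_inter.1 hk).2
            obtain ⟨o₁, ho₁, ho₁l₂⟩ := pick1 (s := S) (by omega) l₂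
            refine main o₁ ho₁ k hkT y₀ (Or.inr ⟨?_, ?_⟩) l₂ ?_ ?_
            · exact mem_ins_erase.2 (Or.inr ⟨fun h => hy₀S (h ▸ hkS), hy₀T⟩)
            · rw [mem_ins_erase]
              rintro (h | ⟨-, hmem⟩)
              · exact hl₁T (h ▸ hy₀T)
              · exact hy₀S hmem
            · exact mem_ins_erase.2 (Or.inr ⟨fun h => ho₁l₂ h.symm, hl₂S⟩)
            · exact mem_ins_erase.2 (Or.inl rfl)
          · obtain ⟨o₁, ho₁, ho₁l₂⟩ := pick1 (s := S) (by omega) l₂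
            obtain ⟨y, hy, hyy₀⟩ := pick1 (s := T) (by omega) y₀
            refine main o₁ ho₁ y hy y₀ (Or.inr ⟨?_, ?_⟩) l₂ ?_ ?_
            · exact mem_ins_erase.2 (Or.inr ⟨Ne.symm hyy₀, hy₀T⟩)
            · rw [mem_ins_erase]
              rintro (h | ⟨-, hmem⟩)
              · exact hl₁T (h ▸ hy₀T)
              · exact hy₀S hmem
            · exact mem_ins_erase.2 (Or.inr ⟨fun h => ho₁l₂ h.symm, hl₂S⟩)
            · exact mem_ins_erase.2 (Or.inl rfl)
        · -- C4 : l₁ ∉ T, l₂ ∉ S, l₁ ≠ l₂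
          have hKne : (S ∩ T).Nonempty := by
            by_contra hK
            have hdisj : Disjoint S T := Finset.disjoint_iff_inter_eq_empty.2
              (Finset.not_nonempty_iff_eq_empty.1 hK)
            have hsub : S ∪ T ∪ {l₁, l₂} ⊆ (Finset.univ : Finset (Fin (2*n-1))) :=
              Finset.subset_univ _
            have hcard := Finset.card_le_card hsub
            have hl₁ : l₁ ∉ S ∪ T := by simp [h1, hl₁T]
            have hl₂ : l₂ ∉ S ∪ T := by simp [hl₂S, h2]
            have hU : (S ∪ T).card = (n-1) + (n-1) := by
              rw [Finset.card_union_of_disjoint hdisj, hS, hT]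
            have hpair : ({l₁, l₂} : Finset (Fin (2*n-1))).card = 2 := by
              rw [Finset.card_insert_of_notMem (by simpa using hll), Finset.card_singleton]
            have hdisj2 : Disjoint (S ∪ T) ({l₁, l₂} : Finset (Fin (2*n-1))) := by
              rw [Finset.disjoint_left]
              intro a ha ha2
              rcases Finset.mem_insert.1 ha2 with rfl | ha2
              · exact hl₁ ha
              · exact hl₂ (Finset.mem_singleton.1 ha2 ▸ ha)
            rw [Finset.card_union_of_disjoint hdisj2, hU, hpair,
              Finset.card_univ, Fintype.card_fin] at hcard
            omega
          obtain ⟨k, hk⟩ := hKne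
          have hkS : k ∈ S := (Finset.mem_inter.1 hk).1
          have hkT : k ∈ T := (Finset.mem_inter.1 hk).2
          refine main x₀ hx₀S y₀ hy₀T l₁ (Or.inl ⟨?_, ?_⟩) k ?_ ?_
          · exact mem_ins_erase.2 (Or.inl rfl)
          · rw [mem_ins_erase]
            rintro (h | ⟨-, hmem⟩)
            · exact hll h
            · exact hl₁T hmem
          · exact mem_ins_erase.2 (Or.inr ⟨fun h => hx₀T (h ▸ hkT), hkS⟩)
          · exact mem_ins_erase.2 (Or.inr ⟨fun h => hy₀S (h ▸ hkS), hkT⟩)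

/-! ### Label level -/

def fstep {m : ℕ} (s : Finset (Fin m)) (l : Fin m) : Finset (Fin m) := (insert l s)ᶜ

def lrun {m : ℕ} (s : Finset (Fin m)) (ls : List (Fin m)) : Finset (Fin m) :=
  ls.foldl fstep s

@[simp] lemma lrun_nil {m : ℕ} (s : Finset (Fin m)) : lrun s [] = s := rfl
@[simp] lemma lrun_cons {m : ℕ} (s : Finset (Fin m)) (l : Fin m) (ls : List (Fin m)) :
    lrun s (l :: ls) = lrun (fstep s l) ls := rfl
lemma lrun_append {m : ℕ} (s : Finset (Fin m)) (ls ms : List (Fin m)) :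
    lrun s (ls ++ ms) = lrun (lrun s ls) ms := List.foldl_append ..

def LFeas {m : ℕ} : Finset (Fin m) → List (Fin m) → Prop
  | _, [] => True
  | s, l :: t => l ∉ s ∧ LFeas (fstep s l) t

@[simp] lemma lfeas_nil {m : ℕ} (s : Finset (Fin m)) : LFeas s [] := trivial
@[simp] lemma lfeas_cons {m : ℕ} (s : Finset (Fin m)) (l : Fin m) (t : List (Fin m)) :
    LFeas s (l :: t) ↔ l ∉ s ∧ LFeas (fstep s l) t := Iff.rfl

def labels {m : ℕ} : List (Fin m × Fin m) → List (Fin m)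
  | [] => []
  | p :: t => p.1 :: p.2 :: labels t

@[simp] lemma labels_nil {m : ℕ} : labels ([] : List (Fin m × Fin m)) = [] := rfl
@[simp] lemma labels_cons {m : ℕ} (p : Fin m × Fin m) (t : List (Fin m × Fin m)) :
    labels (p :: t) = p.1 :: p.2 :: labels t := rfl

lemma labels_length {m : ℕ} (ps : List (Fin m × Fin m)) :
    (labels ps).length = 2 * ps.length := by
  induction ps with
  | nil => rfl
  | cons p t ih => simp [ih]; omega

lemma fstep_fstep {m : ℕ} {s : Finset (Fin m)} {b a : Fin m} (hb : b ∉ s) (ha : a ∈ s) :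
    fstep (fstep s b) a = pstep s (b, a) := by
  have hab : a ≠ b := fun h => hb (h ▸ ha)
  ext x
  simp only [fstep, pstep_def, Finset.mem_compl, Finset.mem_insert, Finset.mem_erase]
  by_cases hxa : x = a <;> by_cases hxb : x = b <;> simp [hxa, hxb, hab] <;> tauto

lemma pairs_to_labels {m : ℕ} {s : Finset (Fin m)} {ps : List (Fin m × Fin m)}
    (hv : PValid s ps) (hc : PChain ps) :
    LFeas s (labels ps) ∧ lrun s (labels ps) = prun s ps ∧
      List.IsChain (· ≠ ·) (labels ps) := by
  induction ps generalizing s with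
  | nil => exact ⟨trivial, rfl, List.isChain_nil⟩
  | cons p t ih =>
    obtain ⟨hb, ha, hv'⟩ := hv
    have hstep : fstep (fstep s p.1) p.2 = pstep s p := fstep_fstep hb ha
    obtain ⟨ih1, ih2, ih3⟩ := ih (s := pstep s p) hv' hc.tail
    refine ⟨⟨hb, ?_, ?_⟩, ?_, ?_⟩
    · show p.2 ∉ fstep s p.1
      simp only [fstep, Finset.mem_compl, not_not]
      exact Finset.mem_insert_of_mem ha
    · rw [hstep]; exact ih1
    · show lrun (fstep (fstep s p.1) p.2) (labels t) = prun (pstep s p) t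
      rw [hstep]; exact ih2
    · rw [labels_cons, List.isChain_cons]
      refine ⟨?_, ?_⟩
      · intro y hy
        simp only [List.head?_cons, Option.mem_some_iff] at hy
        subst hy
        exact fun h => hb (h ▸ ha)
      · rw [List.isChain_cons]
        refine ⟨?_, ih3⟩
        intro y hy
        cases t with
        | nil => simp at hy
        | cons q r =>
          simp only [labels_cons, List.head?_cons, Option.mem_some_iff] at hy
          subst hy
          have := List.isChain_cons_cons.1 hc
          exact Ne.symm this.1

lemma labels_head? {m : ℕ} (ps : List (Fin m × Fin m)) :
    (labels ps).head? = ps.head?.map Prod.fst := by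
  cases ps <;> rfl

lemma labels_getLast? {m : ℕ} (ps : List (Fin m × Fin m)) :
    (labels ps).getLast? = ps.getLast?.map Prod.snd := by
  induction ps with
  | nil => rfl
  | cons p t ih =>
    cases t with
    | nil => rfl
    | cons q r =>
      rw [List.getLast?_cons_cons, ← ih, labels_cons, labels_cons]
      rw [show (p.1 :: p.2 :: q.1 :: q.2 :: labels r) =
        (p.1 :: p.2 :: []) ++ (q.1 :: q.2 :: labels r) by simp,
        List.getLast?_append_of_ne_nil _ (by simp)]

/-! ### The key label-sequence lemma -/

lemma key {n : ℕ} (hn : 4 ≤ n) : ∀ L, 2*n ≤ L →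
    ∀ S T : Finset (Fin (2*n-1)), S.card = n-1 → T.card = n-1 →
    ∀ l₁, l₁ ∉ S → ∀ l₂, l₂ ∉ T →
    ∃ ls : List (Fin (2*n-1)), ls.length = L ∧ List.IsChain (· ≠ ·) ls ∧
      ls.head? = some l₁ ∧ ls.getLast? = some l₂ ∧ LFeas S ls ∧ lrun S ls = T := by
  intro L hL
  induction L, hL using Nat.le_induction with
  | base =>
    intro S T hS hT l₁ h1 l₂ h2
    obtain ⟨ps, psV, psR, psC, psL, psH, psE⟩ := base_pairs hn hS hT h1 h2
    obtain ⟨hf, hr, hch⟩ := pairs_to_labels psV psC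
    have hne : ps ≠ [] := by
      intro h; rw [h] at psL; simp at psL; omega
    obtain ⟨pr0, hpr0⟩ := Option.ne_none_iff_exists'.1 (fun h => hne (List.head?_eq_none_iff.1 h))
    obtain ⟨prl, hprl⟩ := Option.ne_none_iff_exists'.1
      (fun h => hne (List.getLast?_eq_none_iff.1 h))
    refine ⟨labels ps, ?_, hch, ?_, ?_, hf, by rw [hr, psR]⟩
    · rw [labels_length, psL]
    · rw [labels_head?, hpr0]
      simp [psH pr0 hpr0]
    · rw [labels_getLast?, hprl]
      simp [psE prl hprl]
  | succ L hL ih =>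
    intro S T hS hT l₁ h1 l₂ h2
    obtain ⟨l₁', hl₁'⟩ := Finset.card_pos.1 (show 1 ≤ S.card by omega)
    have hfcard : (fstep S l₁).card = n - 1 := by
      rw [fstep, Finset.card_compl, Fintype.card_fin,
        Finset.card_insert_of_notMem h1, hS]
      omega
    have hl₁'f : l₁' ∉ fstep S l₁ := by
      simp only [fstep, Finset.mem_compl, not_not]
      exact Finset.mem_insert_of_mem hl₁'
    obtain ⟨ls', hlen, hch, hhd, hlst, hf, hr⟩ := ih (fstep S l₁) T hfcard hT l₁' hl₁'f l₂ h2
    have hne : ls' ≠ [] := by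
      intro h; rw [h] at hlen; simp at hlen; omega
    refine ⟨l₁ :: ls', by simp [hlen], ?_, rfl, ?_, ⟨h1, hf⟩, hr⟩
    · rw [List.isChain_cons]
      refine ⟨?_, hch⟩
      intro y hy
      rw [hhd] at hy
      simp only [Option.mem_some_iff] at hy
      subst hy
      exact fun h => h1 (h ▸ hl₁')
    · rw [show (l₁ :: ls') = [l₁] ++ ls' by simp,
        List.getLast?_append_of_ne_nil _ hne, hlst]

lemma lfeas_get {m : ℕ} {s : Finset (Fin m)} {ls : List (Fin m)} (hf : LFeas s ls) :
    ∀ i (h : i < ls.length), ls.get ⟨i, h⟩ ∉ lrun s (ls.take i) := by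
  induction ls generalizing s with
  | nil => intro i h; simp at h
  | cons l t ih =>
    obtain ⟨hl, hf'⟩ := hf
    intro i h
    cases i with
    | zero => simpa using hl
    | succ j =>
      have := ih (s := fstep s l) hf' j (by simpa using h)
      simpa using this

lemma fstep_card {n : ℕ} (hn : 4 ≤ n) {s : Finset (Fin (2*n-1))} {l : Fin (2*n-1)}
    (hs : s.card = n-1) (hl : l ∉ s) : (fstep s l).card = n - 1 := by
  rw [fstep, Finset.card_compl, Fintype.card_fin, Finset.card_insert_of_notMem hl, hs]
  omega

lemma fstep_fstep_ne {m : ℕ} {w : Finset (Fin m)} {a b : Fin m}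
    (ha : a ∉ w) (hb : b ∉ fstep w a) (hab : a ≠ b) : fstep (fstep w a) b ≠ w := by
  have hbw : b ∈ w := by
    simp only [fstep, Finset.mem_compl, not_not, Finset.mem_insert] at hb
    rcases hb with rfl | h
    · exact absurd rfl hab.symm
    · exact h
  rw [fstep_fstep ha hbw]
  intro h
  have : a ∈ pstep w (a, b) := by simp
  rw [h] at this
  exact ha this

lemma walk_of_labels {n : ℕ} (hn : 4 ≤ n) :
    ∀ (ls : List (Fin (2*n-1))) (s : Finset (Fin (2*n-1))) (hs : s.card = n-1)
      (hf : LFeas s ls) (v : {t : Finset (Fin (2*n-1)) // t.card = n-1})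
      (hv : lrun s ls = v.1),
      ∃ p : (OddGraph n).Walk ⟨s, hs⟩ v, p.length = ls.length ∧
        ∀ i, (p.getVert i).1 = lrun s (ls.take i) := by
  intro ls
  induction ls with
  | nil =>
    intro s hs hf v hv
    have hveq : (⟨s, hs⟩ : {t : Finset (Fin (2*n-1)) // t.card = n-1}) = v := Subtype.ext hv
    subst hveq
    exact ⟨SimpleGraph.Walk.nil, rfl, fun i => by
      show (⟨s, hs⟩ : {t : Finset (Fin (2*n-1)) // t.card = n-1}).1 = lrun s (List.take i [])
      simp⟩
  | cons l t ih =>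
    intro s hs hf v hv
    obtain ⟨hl, hf'⟩ := hf
    have hs' : (fstep s l).card = n - 1 := fstep_card hn hs hl
    have hadj : (OddGraph n).Adj ⟨s, hs⟩ ⟨fstep s l, hs'⟩ := by
      refine ⟨?_, ?_⟩
      · exact Disjoint.mono_left (Finset.subset_insert l s) disjoint_compl_right
      · intro h
        have hval : s = fstep s l := congrArg Subtype.val h
        have hdisj : Disjoint s s := by
          conv_rhs => rw [hval]
          exact Disjoint.mono_left (Finset.subset_insert l s) disjoint_compl_right
        have : s = ∅ := by
          have := disjoint_self.1 hdisj
          simpa using this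
        rw [this] at hs
        simp at hs
        omega
    obtain ⟨p', hp'len, hp'v⟩ := ih (fstep s l) hs' hf' v hv
    refine ⟨SimpleGraph.Walk.cons hadj p', by simp [hp'len], ?_⟩
    intro i
    cases i with
    | zero => simp
    | succ j =>
      rw [SimpleGraph.Walk.getVert_cons_succ]
      exact hp'v j

end SWL

/-- Given vertices `u, v` of `O_n` (`n ≥ 4`), an integer `L ≥ 2n`, and elements
`λ₁ ∉ [u]`, `λ₂ ∉ [v]`, there is a special walk of length exactly `L` from `u`
to `v` whose first edge is labeled `λ₁` and whose last edge is labeled `λ₂`. -/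
theorem special_walk_long (n : ℕ) (hn : 4 ≤ n) (L : ℕ) (hL : 2 * n ≤ L)
    (u v : {s : Finset (Fin (2 * n - 1)) // s.card = n - 1})
    (lab₁ lab₂ : Fin (2 * n - 1)) (h₁ : lab₁ ∉ u.1) (h₂ : lab₂ ∉ v.1) :
    ∃ p : (OddGraph n).Walk u v, p.length = L ∧ IsSpecialWalk p ∧
      EdgeLabeled u (p.getVert 1) lab₁ ∧
      EdgeLabeled (p.getVert (p.length - 1)) v lab₂ := by
  classical
  obtain ⟨ls, hlen, hch, hhd, hlst, hf, hr⟩ :=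
    SWL.key hn L hL u.1 v.1 u.2 v.2 lab₁ h₁ lab₂ h₂
  obtain ⟨p, hplen, hpv⟩ := SWL.walk_of_labels hn ls u.1 u.2 hf v hr
  have hL0 : 0 < L := by omega
  refine ⟨p, by rw [hplen, hlen], ?_, ?_, ?_⟩
  · -- special walk
    intro i hi2
    rw [hplen, hlen] at hi2
    have h1i : i < ls.length := by omega
    have h2i : i + 1 < ls.length := by omega
    set a := ls.get ⟨i, h1i⟩ with hadef
    set b := ls.get ⟨i+1, h2i⟩ with hbdef
    have htake1 : ls.take (i+1) = ls.take i ++ [a] := by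
      rw [List.take_succ, List.getElem?_eq_getElem h1i]
      rfl
    have htake2 : ls.take (i+2) = ls.take (i+1) ++ [b] := by
      rw [show i+2 = (i+1)+1 from rfl, List.take_succ, List.getElem?_eq_getElem h2i]
      rfl
    have hw1 : SWL.lrun u.1 (ls.take (i+1)) = SWL.fstep (SWL.lrun u.1 (ls.take i)) a := by
      rw [htake1, SWL.lrun_append]
      rfl
    have hw2 : SWL.lrun u.1 (ls.take (i+2)) =
        SWL.fstep (SWL.fstep (SWL.lrun u.1 (ls.take i)) a) b := by
      rw [htake2, SWL.lrun_append, hw1]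
      rfl
    have ha : a ∉ SWL.lrun u.1 (ls.take i) := SWL.lfeas_get hf i h1i
    have hb : b ∉ SWL.fstep (SWL.lrun u.1 (ls.take i)) a := by
      rw [← hw1]
      exact SWL.lfeas_get hf (i+1) h2i
    have hab : a ≠ b := List.isChain_iff_getElem.1 hch i (by omega)
    intro heq
    have hval := congrArg Subtype.val heq
    rw [hpv i, hpv (i+2), hw2] at hval
    exact SWL.fstep_fstep_ne ha hb hab hval.symm
  · -- first edge label
    refine ⟨h₁, ?_⟩
    have hcons : ∃ rest, ls = lab₁ :: rest := by
      cases ls with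
      | nil => simp at hhd
      | cons x rest =>
        simp only [List.head?_cons, Option.some_inj] at hhd
        exact ⟨rest, by rw [hhd]⟩
    obtain ⟨rest, hrest⟩ := hcons
    have : (p.getVert 1).1 = SWL.fstep u.1 lab₁ := by
      rw [hpv 1, hrest]
      rfl
    rw [this]
    simp [SWL.fstep]
  · -- last edge label
    refine ⟨?_, h₂⟩
    have hL1 : L - 1 < ls.length := by omega
    have hlab₂ : lab₂ = ls.get ⟨L-1, hL1⟩ := by
      have := hlst
      rw [List.getLast?_eq_getElem?, hlen] at this
      rw [List.getElem?_eq_getElem (by omega : L - 1 < ls.length)] at this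
      simp only [Option.some_inj] at this
      rw [← this]
      rfl
    have hidx : p.length - 1 = L - 1 := by rw [hplen, hlen]
    rw [hidx, hpv (L-1), hlab₂]
    exact SWL.lfeas_get hf (L-1) hL1
end

section
/- Let L ≥ 9 be an integer. Given two vertices u and v (not necessarily distinct) of the odd graph O_3 (the Petersen graph), and elements λ_1 ∉ [u] and λ_2 ∉ [v], there exists a special walk of length exactly L from u to v in O_3 whose first edge is labeled with λ_1 and whose last edge is labeled with λ_2. -/
namespace SWAux

abbrev V3 := {s : Finset (Fin (2 * 3 - 1)) // s.card = 3 - 1}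

instance : DecidableRel (OddGraph 3).Adj :=
  fun u v => decidable_of_iff (Disjoint u.1 v.1 ∧ u ≠ v) Iff.rfl

/-- Directed arcs of the Petersen graph. -/
abbrev Arc : Type := {p : V3 × V3 // (OddGraph 3).Adj p.1 p.2}

/-- Arcs that can follow a given arc in a special walk. -/
def succ (a : Arc) : Finset Arc :=
  Finset.univ.filter (fun b => b.1.1 = a.1.2 ∧ b.1.2 ≠ a.1.1)

/-- Arcs reachable from `a` in exactly `k` steps of the no-backtracking
arc digraph. -/
def reach : ℕ → Arc → Finset Arc
  | 0, a => {a}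
  | k + 1, a => (reach k a).biUnion succ

/-- `getVert` of a `concat`, within the original walk. -/
lemma getVert_concat_le {V : Type*} {G : SimpleGraph V} {u v w : V}
    (p : G.Walk u v) (h : G.Adj v w) {i : ℕ} (hi : i ≤ p.length) :
    (p.concat h).getVert i = p.getVert i := by
  rw [SimpleGraph.Walk.concat_eq_append, SimpleGraph.Walk.getVert_append]
  split
  · rfl
  · have hi' : i = p.length := le_antisymm hi (not_lt.mp ‹_›)
    subst hi'
    simp [SimpleGraph.Walk.getVert_zero, SimpleGraph.Walk.getVert_length]

lemma getVert_concat_last {V : Type*} {G : SimpleGraph V} {u v w : V}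
    (p : G.Walk u v) (h : G.Adj v w) :
    (p.concat h).getVert (p.length + 1) = w := by
  rw [SimpleGraph.Walk.concat_eq_append, SimpleGraph.Walk.getVert_append]
  split
  · omega
  · have h1 : p.length + 1 - p.length = 1 := by omega
    rw [h1]
    rfl

/-- Reachability in the arc digraph yields special walks. -/
lemma reach_walk : ∀ (k : ℕ) (a b : Arc), b ∈ reach k a →
    ∃ p : (OddGraph 3).Walk a.1.1 b.1.2, p.length = k + 1 ∧ IsSpecialWalk p ∧
      p.getVert 1 = a.1.2 ∧ p.getVert k = b.1.1 := by
  intro k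
  induction k with
  | zero =>
    intro a b hb
    rw [reach, Finset.mem_singleton] at hb
    rw [hb]
    refine ⟨SimpleGraph.Walk.cons a.2 SimpleGraph.Walk.nil, rfl, ?_, rfl, rfl⟩
    intro i hi
    simp [SimpleGraph.Walk.length] at hi
  | succ k ih =>
    intro a b hb
    rw [reach, Finset.mem_biUnion] at hb
    obtain ⟨c, hc, hbc⟩ := hb
    rw [succ, Finset.mem_filter] at hbc
    obtain ⟨-, h1, h2⟩ := hbc
    obtain ⟨p, hlen, hsp, hv1, hvk⟩ := ih a c hc
    have hadj : (OddGraph 3).Adj c.1.2 b.1.2 := h1 ▸ b.2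
    refine ⟨p.concat hadj, ?_, ?_, ?_, ?_⟩
    · rw [SimpleGraph.Walk.length_concat, hlen]
    · intro j hj
      rw [SimpleGraph.Walk.length_concat, hlen] at hj
      rcases Nat.lt_or_ge (j + 2) (k + 2) with hlt | hge
      · rw [getVert_concat_le p hadj (by omega), getVert_concat_le p hadj (by omega)]
        exact hsp j (by omega)
      · have hik : j = k := by omega
        rw [hik]
        rw [getVert_concat_le p hadj (by omega), hvk]
        have : (p.concat hadj).getVert (k + 2) = b.1.2 := by
          have := getVert_concat_last p hadj
          rwa [hlen] at this
        rw [this]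
        exact fun h => h2 h.symm
    · rw [getVert_concat_le p hadj (by omega)]
      exact hv1
    · rw [getVert_concat_le p hadj (by omega)]
      have : p.getVert (k + 1) = c.1.2 := by
        have := p.getVert_length
        rwa [hlen] at this
      rw [this, h1]

lemma reach_eight : ∀ a : Arc, reach 8 a = Finset.univ := by decide

lemma biUnion_succ : Finset.univ.biUnion succ = (Finset.univ : Finset Arc) := by decide

lemma reach_univ : ∀ k, 8 ≤ k → ∀ a : Arc, reach k a = Finset.univ := by
  intro k hk
  induction k, hk using Nat.le_induction with
  | base => exact reach_eight
  | succ k hk ih =>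
    intro a
    rw [reach, ih a, biUnion_succ]

/-- The unique neighbor across an edge with given label. -/
def across (u : V3) (lab : Fin (2 * 3 - 1)) (h : lab ∉ u.1) : V3 :=
  ⟨(Finset.univ \ u.1).erase lab, by
    rw [Finset.card_erase_of_mem (by simp [h]),
      Finset.card_sdiff_of_subset (Finset.subset_univ _), u.2]
    decide⟩

lemma across_adj (u : V3) (lab : Fin (2 * 3 - 1)) (h : lab ∉ u.1) :
    (OddGraph 3).Adj u (across u lab h) := by
  constructor
  · have : (across u lab h).1 ⊆ Finset.univ \ u.1 := Finset.erase_subset _ _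
    exact (Finset.disjoint_of_subset_right this Finset.sdiff_disjoint.symm)
  · intro he
    have hsub : (across u lab h).1 ⊆ Finset.univ \ u.1 := Finset.erase_subset _ _
    have hdisj : Disjoint u.1 (across u lab h).1 :=
      Finset.disjoint_of_subset_right hsub Finset.sdiff_disjoint.symm
    rw [← he] at hdisj
    have h3 := disjoint_self.mp hdisj
    have hc := u.2
    rw [h3] at hc
    simp at hc

lemma lab_not_mem_across (u : V3) (lab : Fin (2 * 3 - 1)) (h : lab ∉ u.1) :
    lab ∉ (across u lab h).1 :=
  Finset.notMem_erase _ _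

end SWAux

/-- Given vertices `u, v` of the Petersen graph `O_3`, an integer `L ≥ 9`, and
elements `λ₁ ∉ [u]`, `λ₂ ∉ [v]`, there is a special walk of length exactly `L`
from `u` to `v` whose first edge is labeled `λ₁` and whose last edge is labeled
`λ₂`. -/
theorem special_walk_long_O3 (L : ℕ) (hL : 9 ≤ L)
    (u v : {s : Finset (Fin (2 * 3 - 1)) // s.card = 3 - 1})
    (lab₁ lab₂ : Fin (2 * 3 - 1)) (h₁ : lab₁ ∉ u.1) (h₂ : lab₂ ∉ v.1) :
    ∃ p : (OddGraph 3).Walk u v, p.length = L ∧ IsSpecialWalk p ∧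
      EdgeLabeled u (p.getVert 1) lab₁ ∧
      EdgeLabeled (p.getVert (p.length - 1)) v lab₂ := by
  classical
  set w₁ := SWAux.across u lab₁ h₁ with hw₁
  set w₂ := SWAux.across v lab₂ h₂ with hw₂
  have ha : (OddGraph 3).Adj u w₁ := SWAux.across_adj u lab₁ h₁
  have hb : (OddGraph 3).Adj w₂ v := ((SWAux.across_adj v lab₂ h₂).symm)
  set a : SWAux.Arc := ⟨(u, w₁), ha⟩ with hadef
  set b : SWAux.Arc := ⟨(w₂, v), hb⟩ with hbdef
  have hmem : b ∈ SWAux.reach (L - 1) a := by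
    rw [SWAux.reach_univ (L - 1) (by omega) a]
    exact Finset.mem_univ _
  obtain ⟨p, hlen, hsp, hv1, hvk⟩ := SWAux.reach_walk (L - 1) a b hmem
  have hlen' : p.length = L := by rw [hlen]; omega
  refine ⟨p, hlen', hsp, ?_, ?_⟩
  · rw [hv1]
    exact ⟨h₁, SWAux.lab_not_mem_across u lab₁ h₁⟩
  · rw [hlen', show L - 1 = L - 1 from rfl, hvk]
    exact ⟨SWAux.lab_not_mem_across v lab₂ h₂, h₂⟩
end

section
/- Let m ≥ 7 be an integer. Given two vertices u and v (not necessarily distinct) of the odd graph O_3 (the Petersen graph), and elements λ_1 ∉ [u] and λ_2 ∉ [v], there exists a special walk of length exactly m from u to v in O_3 whose first edge is NOT labeled with λ_1 and whose last edge is NOT labeled with λ_2. -/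
/-! ### Auxiliary machinery -/

abbrev PV := {s : Finset (Fin (2 * 3 - 1)) // s.card = 3 - 1}

def decChain {α : Type*} (R : α → α → Prop) [DecidableRel R] :
    ∀ (a : α) (l : List α), Decidable (List.Chain R a l)
  | _, [] => isTrue List.Chain.nil
  | a, b :: l =>
    haveI := decChain R b l
    decidable_of_iff (R a b ∧ List.Chain R b l) List.chain_cons.symm

instance : DecidableRel (OddGraph 3).Adj :=
  fun a b => inferInstanceAs (Decidable (Disjoint a.1 b.1 ∧ a ≠ b))

/-- `l` (the list of vertices after `u`) describes a good walk from `u` to `v`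
of length `m`, special, first vertex after `u` contains `l1`, last vertex
before `v` contains `l2`. -/
def GoodList (m : ℕ) (u v : PV) (l1 l2 : Fin (2 * 3 - 1)) (l : List PV) : Prop :=
  l.length = m ∧ List.Chain (OddGraph 3).Adj u l ∧ (u :: l).getLast? = some v ∧
  (∀ i ∈ List.range (m + 1), i + 2 ≤ m → (u :: l).getD i u ≠ (u :: l).getD (i + 2) u) ∧
  l1 ∈ ((u :: l).getD 1 u).1 ∧ l2 ∈ ((u :: l).getD (m - 1) u).1

instance (m u v l1 l2 l) : Decidable (GoodList m u v l1 l2 l) :=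
  haveI := decChain (OddGraph 3).Adj u l
  inferInstanceAs (Decidable (l.length = m ∧ List.Chain (OddGraph 3).Adj u l ∧
    (u :: l).getLast? = some v ∧
    (∀ i ∈ List.range (m + 1), i + 2 ≤ m → (u :: l).getD i u ≠ (u :: l).getD (i + 2) u) ∧
    l1 ∈ ((u :: l).getD 1 u).1 ∧ l2 ∈ ((u :: l).getD (m - 1) u).1))

def allV : List PV :=
  [⟨{0,1}, by decide⟩, ⟨{0,2}, by decide⟩, ⟨{0,3}, by decide⟩, ⟨{0,4}, by decide⟩,
   ⟨{1,2}, by decide⟩, ⟨{1,3}, by decide⟩, ⟨{1,4}, by decide⟩,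
   ⟨{2,3}, by decide⟩, ⟨{2,4}, by decide⟩, ⟨{3,4}, by decide⟩]

def grow1 (l : List PV) : List (List PV) :=
  match l with
  | [] => []
  | a :: rest =>
    (allV.filter (fun x => decide ((OddGraph 3).Adj a x) && decide (rest.head? ≠ some x))).map
      (fun x => x :: a :: rest)

def growN : ℕ → List (List PV) → List (List PV)
  | 0, L => L
  | n + 1, L => growN n (L.flatMap grow1)

def candidates (m : ℕ) (u : PV) (l1 : Fin (2 * 3 - 1)) : List (List PV) :=
  (growN (m - 1)
    ((allV.filter (fun w => decide ((OddGraph 3).Adj u w) && decide (l1 ∈ w.1))).map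
      (fun w => [w, u]))).map (fun l => l.reverse.tail)

set_option maxRecDepth 10000 in
theorem base7 : ∀ u v : PV, ∀ l1 l2 : Fin (2 * 3 - 1), l1 ∉ u.1 → l2 ∉ v.1 →
    ∃ l ∈ candidates 7 u l1, GoodList 7 u v l1 l2 l := by decide

lemma walk_of_chain {V : Type*} {G : SimpleGraph V} :
    ∀ (l : List V) (u : V), List.Chain G.Adj u l →
      ∃ (w : V) (p : G.Walk u w), p.support = u :: l := by
  intro l
  induction l with
  | nil => exact fun u _ => ⟨u, .nil, rfl⟩
  | cons b l ih =>
    intro u h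
    simp only [List.Chain, List.chain_cons] at h
    obtain ⟨w, p, hp⟩ := ih b h.2
    exact ⟨w, .cons h.1 p, by simp [hp]⟩

lemma getVert_eq_getD {V : Type*} {G : SimpleGraph V} {u v : V} (p : G.Walk u v) :
    ∀ i, p.getVert i = p.support.getD i v := by
  induction p with
  | nil =>
    intro i
    rw [SimpleGraph.Walk.getVert_of_length_le _ (Nat.zero_le i)]
    cases i <;> simp
  | cons h p ih =>
    intro i
    cases i with
    | zero => simp
    | succ i => simp [SimpleGraph.Walk.getVert_cons_succ, ih]

/-- Soundness of `GoodList`. -/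
lemma sound {m : ℕ} (hm : 2 ≤ m) (u v : PV) (l1 l2 : Fin (2 * 3 - 1)) (l : List PV)
    (h : GoodList m u v l1 l2 l) :
    ∃ p : (OddGraph 3).Walk u v, p.length = m ∧ IsSpecialWalk p ∧
      ¬ EdgeLabeled u (p.getVert 1) l1 ∧
      ¬ EdgeLabeled (p.getVert (p.length - 1)) v l2 := by
  obtain ⟨hlen, hch, hlast, hsp, h1, h2⟩ := h
  obtain ⟨w, p, hp⟩ := walk_of_chain l u hch
  have hsw : p.support.getLast? = some w := by
    rw [List.getLast?_eq_getLast (l := p.support) (by simp), p.getLast_support]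
  rw [hp, hlast] at hsw
  obtain rfl : w = v := (Option.some_injective _ hsw).symm
  have plen : p.length = m := by
    have := p.length_support
    rw [hp] at this
    simp only [List.length_cons, hlen] at this
    omega
  have key : ∀ i, i ≤ m → p.getVert i = (u :: l).getD i u := by
    intro i hi
    rw [getVert_eq_getD, hp, List.getD_eq_getElem _ _ (by simp [hlen]; omega),
      List.getD_eq_getElem _ _ (by simp [hlen]; omega)]
  refine ⟨p, plen, ?_, ?_, ?_⟩
  · intro i hi
    rw [plen] at hi
    rw [key i (by omega), key (i + 2) (by omega)]
    exact hsp i (List.mem_range.2 (by omega)) hi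
  · rw [key 1 (by omega)]
    rintro ⟨-, hno⟩
    exact hno h1
  · rw [plen, key (m - 1) (by omega)]
    rintro ⟨hno, -⟩
    exact hno h2

/-- The inductive step: extend walks by one edge at the start. -/
lemma step {m : ℕ} (hm : 1 ≤ m)
    (IH : ∀ (u v : PV) (l1 l2 : Fin (2 * 3 - 1)), l1 ∉ u.1 → l2 ∉ v.1 →
      ∃ p : (OddGraph 3).Walk u v, p.length = m ∧ IsSpecialWalk p ∧
        ¬ EdgeLabeled u (p.getVert 1) l1 ∧
        ¬ EdgeLabeled (p.getVert (p.length - 1)) v l2)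
    (u v : PV) (l1 l2 : Fin (2 * 3 - 1)) (h1 : l1 ∉ u.1) (h2 : l2 ∉ v.1) :
    ∃ p : (OddGraph 3).Walk u v, p.length = m + 1 ∧ IsSpecialWalk p ∧
      ¬ EdgeLabeled u (p.getVert 1) l1 ∧
      ¬ EdgeLabeled (p.getVert (p.length - 1)) v l2 := by
  classical
  set c : Finset (Fin (2 * 3 - 1)) := u.1ᶜ with hc
  have hcc : c.card = 3 := by
    rw [hc, Finset.card_compl, u.2]
    simp
  have hl1c : l1 ∈ c := Finset.mem_compl.2 h1
  have hte : (c.erase l1).Nonempty := by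
    rw [← Finset.card_pos, Finset.card_erase_of_mem hl1c, hcc]
    norm_num
  obtain ⟨μ, hμ⟩ := hte
  rw [Finset.mem_erase] at hμ
  obtain ⟨hμne, hμc⟩ := hμ
  have hμu : μ ∉ u.1 := Finset.mem_compl.1 hμc
  refine ?_
  have hwcard : (c.erase μ).card = 3 - 1 := by
    rw [Finset.card_erase_of_mem hμc, hcc]
  set w : PV := ⟨c.erase μ, hwcard⟩ with hwdef
  have hl1w : l1 ∈ w.1 := Finset.mem_erase.2 ⟨hμne.symm, hl1c⟩
  have hμw : μ ∉ w.1 := Finset.notMem_erase μ c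
  have hdisj : Disjoint u.1 w.1 :=
    (disjoint_compl_right).mono_right (Finset.erase_subset μ c)
  have hne : u ≠ w := by
    intro e
    exact h1 (by rw [e]; exact hl1w)
  have hadj : (OddGraph 3).Adj u w := ⟨hdisj, hne⟩
  obtain ⟨p, plen, psp, pfirst, plast⟩ := IH w v μ l2 hμw h2
  refine ⟨p.cons hadj, by simp [plen], ?_, ?_, ?_⟩
  · intro i hi
    rw [SimpleGraph.Walk.length_cons, plen] at hi
    cases i with
    | zero =>
      have hμin : μ ∈ (p.getVert 1).1 := by
        by_contra hno
        exact pfirst ⟨hμw, hno⟩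
      simp only [SimpleGraph.Walk.getVert_zero, SimpleGraph.Walk.getVert_cons_succ]
      intro he
      exact hμu (by rw [he]; exact hμin)
    | succ i =>
      simp only [SimpleGraph.Walk.getVert_cons_succ]
      exact psp i (by omega)
  · have : (p.cons hadj).getVert 1 = w := by
      simp [SimpleGraph.Walk.getVert_cons_succ]
    rw [this]
    rintro ⟨-, hno⟩
    exact hno hl1w
  · have hql : (p.cons hadj).length - 1 = p.length := by
      simp [SimpleGraph.Walk.length_cons]
    rw [hql]
    obtain ⟨k, hk⟩ : ∃ k, p.length = k + 1 := ⟨p.length - 1, by omega⟩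
    rw [hk, SimpleGraph.Walk.getVert_cons_succ]
    have : k = p.length - 1 := by omega
    rw [this]
    exact plast

/-- Given vertices `u, v` of the Petersen graph `O_3`, an integer `m ≥ 7`, and
elements `λ₁ ∉ [u]`, `λ₂ ∉ [v]`, there is a special walk of length exactly `m`
from `u` to `v` whose first edge is not labeled `λ₁` and whose last edge is not
labeled `λ₂`. -/
theorem special_walk_avoiding_O3 (m : ℕ) (hm : 7 ≤ m)
    (u v : {s : Finset (Fin (2 * 3 - 1)) // s.card = 3 - 1})
    (lab₁ lab₂ : Fin (2 * 3 - 1)) (h₁ : lab₁ ∉ u.1) (h₂ : lab₂ ∉ v.1) :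
    ∃ p : (OddGraph 3).Walk u v, p.length = m ∧ IsSpecialWalk p ∧
      ¬ EdgeLabeled u (p.getVert 1) lab₁ ∧
      ¬ EdgeLabeled (p.getVert (p.length - 1)) v lab₂ := by
  induction m, hm using Nat.le_induction generalizing u v lab₁ lab₂ with
  | base =>
    obtain ⟨l, -, hl⟩ := base7 u v lab₁ lab₂ h₁ h₂
    exact sound (by norm_num) u v lab₁ lab₂ l hl
  | succ m hm ih =>
    exact step (by omega) (fun u v l1 l2 => ih u v l1 l2) u v lab₁ lab₂ h₁ h₂
end

section
/- Let n ≥ 4 and let u and v be vertices of the odd graph O_n such that [u] and [v] are disjoint, and let λ be the unique element of {1, …, 2n−1} lying in neither [u] nor [v]. Then every walk of even length from u to v in O_n whose first edge is labeled with λ has length at least 2n. Consequently, the length 2n in the prescribed-labels walk theorem for O_n cannot be replaced by any smaller even number. -/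
/-- Sharpness (even case): if `[u]` and `[v]` are disjoint and `lab` is the
unique element in neither `[u]` nor `[v]`, then every even-length walk from `u`
to `v` whose first edge is labeled `lab` has length at least `2n`. -/
theorem even_walk_lower_bound (n : ℕ) (hn : 4 ≤ n)
    (u v : {s : Finset (Fin (2 * n - 1)) // s.card = n - 1})
    (hdisj : Disjoint u.1 v.1)
    (lab : Fin (2 * n - 1)) (hu : lab ∉ u.1) (hv : lab ∉ v.1) :
    ∀ p : (OddGraph n).Walk u v, Even p.length →
      EdgeLabeled u (p.getVert 1) lab → 2 * n ≤ p.length := by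
  classical
  intro p hev hfirst
  set k := p.length with hk
  -- each edge has a unique label
  have key : ∀ i : ℕ, ∃ x : Fin (2*n-1), i < k →
      (x ∉ (p.getVert i).1 ∧ x ∉ (p.getVert (i+1)).1) ∧
      ∀ y : Fin (2*n-1), y ∉ (p.getVert i).1 → y ∉ (p.getVert (i+1)).1 → y = x := by
    intro i
    by_cases hi : i < k
    · obtain ⟨hd, -⟩ := (show Disjoint (p.getVert i).1 (p.getVert (i+1)).1 ∧ p.getVert i ≠ p.getVert (i+1) from p.adj_getVert_succ (hk ▸ hi))
      have hcard : ((p.getVert i).1 ∪ (p.getVert (i+1)).1)ᶜ.card = 1 := by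
        rw [Finset.card_compl, Finset.card_union_of_disjoint hd,
          (p.getVert i).2, (p.getVert (i+1)).2, Fintype.card_fin]
        omega
      obtain ⟨a, ha⟩ := Finset.card_eq_one.mp hcard
      refine ⟨a, fun _ => ⟨?_, ?_⟩⟩
      · have : a ∈ ((p.getVert i).1 ∪ (p.getVert (i+1)).1)ᶜ := ha ▸ Finset.mem_singleton_self a
        simpa [Finset.mem_union, not_or] using this
      · intro y h1 h2
        have : y ∈ ((p.getVert i).1 ∪ (p.getVert (i+1)).1)ᶜ := by
          simp [Finset.mem_union, h1, h2]
        rw [ha] at this; simpa using this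
    · exact ⟨lab, fun h => absurd h hi⟩
  choose lbl hlbl using key
  -- k ≠ 0
  have hk0 : k ≠ 0 := by
    intro h0
    have hv0 : v = u := by
      have := p.getVert_length
      rw [← hk, h0, p.getVert_zero] at this
      exact this.symm
    rw [hv0, disjoint_self] at hdisj
    have := u.2
    rw [hdisj] at this
    simp at this
    omega
  -- parity invariant
  have par : ∀ x : Fin (2*n-1), ∀ m, m ≤ k →
      (if x ∈ (p.getVert m).1 then (1 : ZMod 2) else 0) =
        (if x ∈ u.1 then (1 : ZMod 2) else 0) + (m : ZMod 2) +
          (((Finset.range m).filter fun i => lbl i = x).card : ZMod 2) := by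
    intro x m
    induction m with
    | zero => simp
    | succ m ih =>
      intro hm
      have hmk : m < k := by omega
      have ihm := ih (by omega)
      obtain ⟨⟨hx1, hx2⟩, huniq⟩ := hlbl m hmk
      have hd := (show Disjoint (p.getVert m).1 (p.getVert (m+1)).1 ∧ p.getVert m ≠ p.getVert (m+1) from p.adj_getVert_succ (hk ▸ hmk)).1
      have hcount : (((Finset.range (m+1)).filter fun i => lbl i = x).card : ℕ)
          = ((Finset.range m).filter fun i => lbl i = x).card
            + if lbl m = x then 1 else 0 := by
        rw [Finset.range_add_one, Finset.filter_insert]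
        split
        · rw [Finset.card_insert_of_notMem (by simp)]
        · simp
      have step : (if x ∈ (p.getVert (m+1)).1 then (1 : ZMod 2) else 0)
          = (if x ∈ (p.getVert m).1 then (1 : ZMod 2) else 0) + 1
            + (if lbl m = x then 1 else 0) := by
        by_cases hlm : lbl m = x
        · subst hlm
          rw [if_neg hx1, if_neg hx2, if_pos rfl]
          decide
        · have hor : x ∈ (p.getVert m).1 ∨ x ∈ (p.getVert (m+1)).1 := by
            by_contra hc
            push_neg at hc
            exact hlm ((huniq x hc.1 hc.2).symm)
          rw [if_neg hlm]
          rcases hor with h | h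
          · rw [if_pos h, if_neg (fun hh => (Finset.disjoint_left.mp hd h) hh)]
            decide
          · rw [if_pos h, if_neg (fun hh => (Finset.disjoint_left.mp hd hh) h)]
            decide
      rw [step, ihm, hcount]
      push_cast
      ring
  -- counts
  set c : Fin (2*n-1) → ℕ := fun x => ((Finset.range k).filter fun i => lbl i = x).card
    with hc
  have hparf : ∀ x : Fin (2*n-1),
      (if x ∈ v.1 then (1 : ZMod 2) else 0) =
        (if x ∈ u.1 then (1 : ZMod 2) else 0) + (c x : ZMod 2) := by
    intro x
    have := par x k le_rfl
    rw [hk, p.getVert_length] at this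
    have hkz : ((k : ℕ) : ZMod 2) = 0 :=
      (ZMod.natCast_eq_zero_iff k 2).mpr hev.two_dvd
    rw [hkz, add_zero] at this
    exact this
  -- lab labels edge 0
  have hl0 : lbl 0 = lab := by
    obtain ⟨-, huniq⟩ := hlbl 0 (Nat.pos_of_ne_zero hk0)
    have h0 : (p.getVert 0).1 = u.1 := by rw [p.getVert_zero]
    exact (huniq lab (h0 ▸ hu) hfirst.2).symm
  -- c lab ≥ 2
  have hclab : 2 ≤ c lab := by
    have h1 : 1 ≤ c lab := by
      rw [hc]
      refine Finset.card_pos.mpr ⟨0, ?_⟩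
      simp [Finset.mem_filter, Nat.pos_of_ne_zero hk0, hl0]
    have h2 : (c lab : ZMod 2) = 0 := by
      have := hparf lab
      rw [if_neg hu, if_neg hv, zero_add] at this
      exact this.symm
    have h3 : 2 ∣ c lab := (ZMod.natCast_eq_zero_iff _ 2).mp h2
    omega
  -- other elements label at least one edge
  have hoth : ∀ x : Fin (2*n-1), x ≠ lab → 1 ≤ c x := by
    intro x hx
    -- x ∈ u.1 ∪ v.1
    have hmem : x ∈ u.1 ∪ v.1 := by
      by_contra hmu
      rw [Finset.mem_union] at hmu
      push_neg at hmu
      have hcard : (u.1 ∪ v.1)ᶜ.card = 1 := by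
        rw [Finset.card_compl, Finset.card_union_of_disjoint hdisj, u.2, v.2,
          Fintype.card_fin]
        omega
      obtain ⟨a, ha⟩ := Finset.card_eq_one.mp hcard
      have hx' : x ∈ (u.1 ∪ v.1)ᶜ := by simp [Finset.mem_union, hmu.1, hmu.2]
      have hlab' : lab ∈ (u.1 ∪ v.1)ᶜ := by simp [Finset.mem_union, hu, hv]
      rw [ha, Finset.mem_singleton] at hx' hlab'
      exact hx (hx'.trans hlab'.symm)
    have hone : (c x : ZMod 2) = 1 := by
      have := hparf x
      rw [Finset.mem_union] at hmem
      rcases hmem with h | h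
      · have h2 : x ∉ v.1 := Finset.disjoint_left.mp hdisj h
        rw [if_neg h2, if_pos h] at this
        rw [show (1 : ZMod 2) = -1 from by decide]
        linear_combination -this
      · have h2 : x ∉ u.1 := fun hh => Finset.disjoint_left.mp hdisj hh h
        rw [if_pos h, if_neg h2, zero_add] at this
        exact this.symm
    by_contra hcx
    push_neg at hcx
    interval_cases h : c x
    simp [h] at hone
  -- sum of counts equals k
  have hsum : ∑ x : Fin (2*n-1), c x = k := by
    rw [hc]
    exact (Finset.card_eq_sum_card_fiberwise
      (fun i _ => Finset.mem_univ (lbl i)) (t := Finset.univ)).symm ▸ by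
        simpa using (Finset.card_range k ▸
          (Finset.card_eq_sum_card_fiberwise
            (f := lbl) (s := Finset.range k) (t := Finset.univ)
            (fun i _ => Finset.mem_univ (lbl i)))).symm
  -- final count
  have hlb : ∑ x : Fin (2*n-1), (if x = lab then 2 else 1) ≤ ∑ x : Fin (2*n-1), c x := by
    refine Finset.sum_le_sum fun x _ => ?_
    by_cases hx : x = lab
    · subst hx; simpa using hclab
    · simpa [hx] using hoth x hx
  have hval : ∑ x : Fin (2*n-1), (if x = lab then 2 else 1) = 2 * n := by
    have : ∀ x : Fin (2*n-1), (if x = lab then 2 else 1) = 1 + (if x = lab then 1 else 0) := by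
      intro x; split <;> rfl
    simp only [this, Finset.sum_add_distrib, Finset.sum_const, Finset.card_univ,
      Fintype.card_fin, smul_eq_mul, mul_one, Finset.sum_ite_eq', Finset.mem_univ, if_pos]
    omega
  omega
end

section
/- Let n ≥ 4, let u be a vertex of the odd graph O_n, let w be the vertex with [w] = {1,…,2n−1} \ ([u] ∪ {λ}) for some λ ∉ [u] (so uw is the edge labeled λ). Then every special walk of odd length from u back to u in O_n whose first edge and last edge are both labeled with λ has length at least 2n + 1. Consequently, the length 2n in the prescribed-labels walk theorem for O_n cannot be replaced by any smaller odd number. -/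
/-- Step lemma: over two consecutive edges, the intersection with a fixed set `t`
grows by at most 1, since `a` and `c` both lie in the `n`-element complement of `b`. -/
lemma odd_step (n : ℕ) (hn : 1 ≤ n)
    (a b c : {s : Finset (Fin (2 * n - 1)) // s.card = n - 1})
    (t : Finset (Fin (2 * n - 1)))
    (hab : (OddGraph n).Adj a b) (hbc : (OddGraph n).Adj b c) :
    (c.1 ∩ t).card ≤ (a.1 ∩ t).card + 1 := by
  have hV : (Finset.univ : Finset (Fin (2 * n - 1))).card = 2 * n - 1 := by simp
  have hsub_a : a.1 ⊆ Finset.univ \ b.1 := by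
    intro x hx
    simp only [Finset.mem_sdiff, Finset.mem_univ, true_and]
    exact fun hxb => Finset.disjoint_left.mp hab.1 hx hxb
  have hsub_c : c.1 ⊆ Finset.univ \ b.1 := by
    intro x hx
    simp only [Finset.mem_sdiff, Finset.mem_univ, true_and]
    exact fun hxb => Finset.disjoint_left.mp hbc.1 hxb hx
  have hcb : (Finset.univ \ b.1).card = n := by
    rw [Finset.card_sdiff_of_subset (Finset.subset_univ _), hV, b.2]; omega
  have ht1 : ((Finset.univ \ b.1) \ a.1).card = 1 := by
    rw [Finset.card_sdiff_of_subset hsub_a, hcb, a.2]; omega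
  have hc_sub : c.1 ∩ t ⊆ (a.1 ∩ t) ∪ ((Finset.univ \ b.1) \ a.1) := by
    intro x hx
    rw [Finset.mem_inter] at hx
    by_cases hxa : x ∈ a.1
    · exact Finset.mem_union_left _ (Finset.mem_inter.mpr ⟨hxa, hx.2⟩)
    · exact Finset.mem_union_right _ (Finset.mem_sdiff.mpr ⟨hsub_c hx.1, hxa⟩)
  calc (c.1 ∩ t).card ≤ ((a.1 ∩ t) ∪ ((Finset.univ \ b.1) \ a.1)).card :=
        Finset.card_le_card hc_sub
    _ ≤ (a.1 ∩ t).card + ((Finset.univ \ b.1) \ a.1).card := Finset.card_union_le _ _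
    _ = (a.1 ∩ t).card + 1 := by rw [ht1]

/-- Sharpness (odd case): let `u` be a vertex of `O_n` (`n ≥ 4`), `lab ∉ [u]`,
and let `w` be the vertex with `[w] = {1,…,2n-1} \ ([u] ∪ {lab})` (so `uw` is
the edge labeled `lab`).  Then every special walk of odd length from `u` back
to `u` whose first and last edges are both labeled `lab` has length at least
`2n + 1`. -/
theorem odd_special_walk_lower_bound (n : ℕ) (hn : 4 ≤ n)
    (u w : {s : Finset (Fin (2 * n - 1)) // s.card = n - 1})
    (lab : Fin (2 * n - 1)) (hu : lab ∉ u.1)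
    (hw : w.1 = Finset.univ \ (insert lab u.1)) :
    ∀ p : (OddGraph n).Walk u u, Odd p.length → IsSpecialWalk p →
      EdgeLabeled u (p.getVert 1) lab →
      EdgeLabeled (p.getVert (p.length - 1)) u lab →
      2 * n + 1 ≤ p.length := by
  intro p hodd _hsp h1 h2
  obtain ⟨m, hm⟩ := hodd
  set k := p.length with hk
  have hV : (Finset.univ : Finset (Fin (2 * n - 1))).card = 2 * n - 1 := by simp
  have hwcard : (Finset.univ \ insert lab u.1).card = n - 1 := by
    rw [Finset.card_sdiff_of_subset (Finset.subset_univ _), hV, Finset.card_insert_of_notMem hu, u.2]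
    omega
  have hadj : ∀ i, i < k → (OddGraph n).Adj (p.getVert i) (p.getVert (i + 1)) :=
    fun i hi => p.adj_getVert_succ hi
  have hkpos : 0 < k := by omega
  -- a general lemma: any neighbor of u avoiding lab equals w
  have hforce : ∀ v : {s : Finset (Fin (2 * n - 1)) // s.card = n - 1},
      Disjoint u.1 v.1 → lab ∉ v.1 → v = w := by
    intro v hdisj hlv
    apply Subtype.ext
    rw [hw]
    apply Finset.eq_of_subset_of_card_le
    · intro x hx
      simp only [Finset.mem_sdiff, Finset.mem_univ, true_and, Finset.mem_insert, not_or]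
      exact ⟨fun hxl => hlv (hxl ▸ hx), fun hxu => Finset.disjoint_left.mp hdisj hxu hx⟩
    · rw [hwcard, v.2]
  -- getVert 1 = w
  have hadj0 := hadj 0 hkpos
  rw [p.getVert_zero] at hadj0
  have hw1 : p.getVert 1 = w := hforce _ hadj0.1 h1.2
  -- k ≠ 1
  have hk1 : k ≠ 1 := by
    intro h
    have : p.getVert 1 = u := by
      have := p.getVert_length
      rw [← hk, h] at this
      exact this
    rw [hw1] at this
    have : u.1 = w.1 := by rw [this]
    have hdis := hadj0.1
    rw [hw1] at hdis
    rw [← this] at hdis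
    have hemp : u.1 = ∅ := by simpa using disjoint_self.mp hdis
    have hc := u.2
    rw [hemp, Finset.card_empty] at hc
    omega
  have hk3 : 3 ≤ k := by omega
  -- getVert (k-1) = w
  have hadjlast := hadj (k - 1) (by omega)
  have hgl : p.getVert (k - 1 + 1) = u := by
    have e : k - 1 + 1 = k := by omega
    rw [e, hk]; exact p.getVert_length
  rw [hgl] at hadjlast
  have hw2 : p.getVert (k - 1) = w := hforce _ hadjlast.1.symm h2.1
  -- base: (getVert 2 ∩ w).card = 0
  have hbase : ((p.getVert 2).1 ∩ w.1).card = 0 := by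
    have hadj1 := hadj 1 (by omega)
    rw [hw1] at hadj1
    rw [Finset.card_eq_zero]
    rw [Finset.eq_empty_iff_forall_notMem]
    intro x hx
    rw [Finset.mem_inter] at hx
    have : (1 : ℕ) + 1 = 2 := rfl
    rw [this] at hadj1
    exact Finset.disjoint_left.mp hadj1.1 hx.2 hx.1
  -- induction
  have main : ∀ j, 1 ≤ j → 2 * j + 1 ≤ k → ((p.getVert (2 * j)).1 ∩ w.1).card ≤ j - 1 := by
    intro j
    induction j with
    | zero => omega
    | succ j ih =>
      intro _ hle
      by_cases hj : j = 0
      · subst hj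
        simpa using Nat.le_of_eq hbase
      · have ih' := ih (by omega) (by omega)
        have hstep := odd_step n (by omega) (p.getVert (2 * j)) (p.getVert (2 * j + 1))
          (p.getVert (2 * j + 2)) w.1 (hadj (2 * j) (by omega)) (hadj (2 * j + 1) (by omega))
        have e : 2 * (j + 1) = 2 * j + 2 := by ring
        rw [e]
        omega
  have hm1 : 1 ≤ m := by omega
  have hfin := main m hm1 (by omega)
  have e : 2 * m = k - 1 := by omega
  rw [e, hw2, Finset.inter_self, w.2] at hfin
  omega
end
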